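/- arXiv:2010.16180 — 11 statements merged into one kernel-verified Lean document; each statement's English description precedes it below -/
import Mathlib

section
/- Let Γ = (S,A) and Γ' = (S',A') be skew-symmetric graphs over 𝔽 with decloning maps p : S → S̄ and p' : S' → S̄'. If Φ : Γ → Γ' is a surjective graph morphism, then there exists a unique map Φ̄ : S̄ → S̄' such that p' ∘ Φ = Φ̄ ∘ p; moreover this Φ̄ is a surjective weighted graph morphism (Γ̄,ϖ_Γ) → (Γ̄',ϖ_{Γ'}). -/
open scoped BigOperators

attribute [local instance] Classical.propDecidable

/-- The relation identifying vertices of a skew-symmetric graph having identical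
rows of the adjacency matrix: `s ~ t` iff `A s u = A t u` for all `u`. -/
def skewRel {𝔽 S : Type*} (A : S → S → 𝔽) (s t : S) : Prop :=
  ∀ u, A s u = A t u

/-- The setoid on the vertex set used for decloning. -/
def declSetoid {𝔽 S : Type*} (A : S → S → 𝔽) : Setoid S :=
  ⟨skewRel A, ⟨fun _ _ => rfl, fun h u => (h u).symm, fun h₁ h₂ u => (h₁ u).trans (h₂ u)⟩⟩

/-- The adjacency matrix of the decloned graph. -/
def declAdj {𝔽 : Type*} [RCLike 𝔽] {S : Type*} (A : S → S → 𝔽)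
    (hA : ∀ s t, A s t = -A t s) :
    Quotient (declSetoid A) → Quotient (declSetoid A) → 𝔽 :=
  Quotient.lift₂ A fun s t s' t' hs ht => by
    have h₁ : A s t = A s' t := hs t
    have h₂ : A s' t = A s' t' := by rw [hA s' t, ht s', ← hA s' t']
    exact h₁.trans h₂

/-- The weight of the decloned graph: the number of clones of a vertex. -/
noncomputable def declWeight {𝔽 S : Type*} (A : S → S → 𝔽)
    (q : Quotient (declSetoid A)) : ℕ :=
  Nat.card {t : S // Quotient.mk (declSetoid A) t = q}

/-- A graph morphism between skew-symmetric graphs. -/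
def IsGraphMorphism {𝔽 S S' : Type*} (A : S → S → 𝔽) (A' : S' → S' → 𝔽) (Φ : S → S') : Prop :=
  ∀ s t, A' (Φ s) (Φ t) = A s t

/-- A (linear) morphism of Lotka-Volterra systems: a linear map which is a Poisson map for the
quadratic Poisson structures attached to `A`, `A'` and which preserves the Hamiltonians. -/
def IsLVMorphism {𝔽 : Type*} [RCLike 𝔽] {S S' : Type*} [Fintype S] [Fintype S']
    (A : S → S → 𝔽) (A' : S' → S' → 𝔽) (φ : (S → 𝔽) →ₗ[𝔽] (S' → 𝔽)) : Prop :=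
  (∀ u v, ∀ x : S → 𝔽,
      ∑ s, ∑ t, A s t * φ (Pi.single s 1) u * φ (Pi.single t 1) v * x s * x t
        = A' u v * φ x u * φ x v) ∧
  ∀ x : S → 𝔽, ∑ u, φ x u = ∑ s, x s

/-- The linear extension of a map between vertex sets: `(lvExt 𝔽 Φ x) u = ∑_{s : Φ s = u} x s`. -/
noncomputable def lvExt (𝔽 : Type*) [RCLike 𝔽] {S S' : Type*} [Fintype S] (Φ : S → S') :
    (S → 𝔽) →ₗ[𝔽] (S' → 𝔽) where
  toFun x := fun u => ∑ s, if Φ s = u then x s else 0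
  map_add' x y := by
    funext u
    simp only [Pi.add_apply]
    rw [← Finset.sum_add_distrib]
    refine Finset.sum_congr rfl fun s _ => ?_
    by_cases h : Φ s = u <;> simp [h]
  map_smul' c x := by
    funext u
    simp only [Pi.smul_apply, RingHom.id_apply, smul_eq_mul, Finset.mul_sum]
    refine Finset.sum_congr rfl fun s _ => ?_
    by_cases h : Φ s = u <;> simp [h]

/-- Proposition 2.7 (1): decloning of surjective graph morphisms. -/
theorem stmt1 {𝔽 S S' : Type*} [RCLike 𝔽] [Fintype S] [Fintype S']
    (A : S → S → 𝔽) (A' : S' → S' → 𝔽)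
    (hA : ∀ s t, A s t = -A t s) (hA' : ∀ s t, A' s t = -A' t s)
    (Φ : S → S') (hΦ : IsGraphMorphism A A' Φ) (hΦsurj : Function.Surjective Φ) :
    (∃! Ψ : Quotient (declSetoid A) → Quotient (declSetoid A'),
        ∀ s : S, Quotient.mk (declSetoid A') (Φ s) = Ψ (Quotient.mk (declSetoid A) s)) ∧
    ∀ Ψ : Quotient (declSetoid A) → Quotient (declSetoid A'),
      (∀ s : S, Quotient.mk (declSetoid A') (Φ s) = Ψ (Quotient.mk (declSetoid A) s)) →
      Function.Surjective Ψ ∧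
        IsGraphMorphism (declAdj A hA) (declAdj A' hA') Ψ ∧
        ∀ q, declWeight A' (Ψ q) ≤ declWeight A q := by
  
  have hresp : ∀ s t : S, skewRel A s t → skewRel A' (Φ s) (Φ t) := by
    intro s t h u'
    obtain ⟨u, rfl⟩ := hΦsurj u'
    rw [hΦ s u, hΦ t u, h u]
  refine ⟨⟨Quotient.lift (fun s => Quotient.mk (declSetoid A') (Φ s))
      (fun s t h => Quotient.sound (hresp s t h)), fun s => rfl, ?_⟩, ?_⟩
  · intro Ψ hΨ
    funext q
    induction q using Quotient.ind with
    | _ s => exact (hΨ s).symm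
  · intro Ψ hΨ
    refine ⟨?_, ?_, ?_⟩
    · intro q'
      induction q' using Quotient.ind with
      | _ t' =>
        obtain ⟨t, rfl⟩ := hΦsurj t'
        exact ⟨Quotient.mk _ t, (hΨ t).symm⟩
    · intro q r
      induction q using Quotient.ind with
      | _ s =>
        induction r using Quotient.ind with
        | _ t =>
          rw [← hΨ s, ← hΨ t]
          exact hΦ s t
    · intro q
      induction q using Quotient.ind with
      | _ s =>
        have hsurj : Function.Surjective
            (fun t : {t : S // Quotient.mk (declSetoid A) t = Quotient.mk (declSetoid A) s} =>
              (⟨Φ t.1, by rw [hΨ, t.2]⟩ :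
                {t' : S' // Quotient.mk (declSetoid A') t' =
                  Ψ (Quotient.mk (declSetoid A) s)})) := by
          rintro ⟨t', ht'⟩
          obtain ⟨t, rfl⟩ := hΦsurj t'
          have h1 : skewRel A' (Φ t) (Φ s) := by
            have := ht'.trans (hΨ s).symm
            exact Quotient.exact this
          have h2 : skewRel A t s := by
            intro u
            rw [← hΦ t u, ← hΦ s u, h1 (Φ u)]
          exact ⟨⟨t, Quotient.sound h2⟩, rfl⟩
        exact Nat.card_le_card_of_surjective _ hsurj
end

section
/- Let Γ = (S,A) and Γ' = (S',A') be skew-symmetric graphs over 𝔽 with decloning maps p : S → S̄ and p' : S' → S̄'. If Ψ : (Γ̄,ϖ_Γ) → (Γ̄',ϖ_{Γ'}) is a surjective weighted graph morphism, then there exists a surjective graph morphism Φ : Γ → Γ' such that p' ∘ Φ = Ψ ∘ p. -/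
open scoped BigOperators

attribute [local instance] Classical.propDecidable

/-- Proposition 2.7 (3): lifting surjective weighted graph morphisms of decloned graphs. -/
theorem stmt2 {𝔽 S S' : Type*} [RCLike 𝔽] [Fintype S] [Fintype S']
    (A : S → S → 𝔽) (A' : S' → S' → 𝔽)
    (hA : ∀ s t, A s t = -A t s) (hA' : ∀ s t, A' s t = -A' t s)
    (Ψ : Quotient (declSetoid A) → Quotient (declSetoid A'))
    (hΨ : IsGraphMorphism (declAdj A hA) (declAdj A' hA') Ψ)
    (hΨw : ∀ q, declWeight A' (Ψ q) ≤ declWeight A q)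
    (hΨsurj : Function.Surjective Ψ) :
    ∃ Φ : S → S', Function.Surjective Φ ∧ IsGraphMorphism A A' Φ ∧
      ∀ s : S, Quotient.mk (declSetoid A') (Φ s) = Ψ (Quotient.mk (declSetoid A) s) := by
  classical
  have hfib : ∀ q : Quotient (declSetoid A),
      ∃ f : {t : S // Quotient.mk (declSetoid A) t = q} →
        {t' : S' // Quotient.mk (declSetoid A') t' = Ψ q}, Function.Surjective f := by
    intro q
    have h1 : Nonempty {t' : S' // Quotient.mk (declSetoid A') t' = Ψ q} := by
      obtain ⟨s', hs'⟩ := Quotient.exists_rep (Ψ q)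
      exact ⟨⟨s', hs'⟩⟩
    have hcard : Fintype.card {t' : S' // Quotient.mk (declSetoid A') t' = Ψ q}
        ≤ Fintype.card {t : S // Quotient.mk (declSetoid A) t = q} := by
      have := hΨw q
      simpa [declWeight, Nat.card_eq_fintype_card] using this
    obtain ⟨e⟩ := Function.Embedding.nonempty_of_card_le hcard
    exact ⟨Function.invFun e, Function.invFun_surjective e.injective⟩
  choose f hf using hfib
  refine ⟨fun s => (f (Quotient.mk (declSetoid A) s) ⟨s, rfl⟩).val, ?_, ?_, ?_⟩
  · intro s'
    obtain ⟨q, hq⟩ := hΨsurj (Quotient.mk (declSetoid A') s')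
    obtain ⟨⟨a, ha⟩, hfa⟩ := hf q ⟨s', hq.symm⟩
    subst ha
    exact ⟨a, congrArg Subtype.val hfa⟩
  · intro s t
    have h1 := (f (Quotient.mk (declSetoid A) s) ⟨s, rfl⟩).property
    have h2 := (f (Quotient.mk (declSetoid A) t) ⟨t, rfl⟩).property
    have : A' (f (Quotient.mk (declSetoid A) s) ⟨s, rfl⟩).val
        (f (Quotient.mk (declSetoid A) t) ⟨t, rfl⟩).val
        = declAdj A' hA' (Ψ (Quotient.mk (declSetoid A) s)) (Ψ (Quotient.mk (declSetoid A) t)) := by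
      exact congrArg₂ (declAdj A' hA') h1 h2
    rw [this, hΨ]; rfl
  · intro s
    exact (f (Quotient.mk (declSetoid A) s) ⟨s, rfl⟩).property
end

section
/- Two skew-symmetric graphs Γ = (S,A) and Γ' = (S',A') over 𝔽 are isomorphic as graphs if and only if their weighted decloned graphs (Γ̄,ϖ_Γ) and (Γ̄',ϖ_{Γ'}) are isomorphic as weighted graphs. -/
open scoped BigOperators

attribute [local instance] Classical.propDecidable

/-- Proposition 2.8 (2): two graphs are isomorphic iff their weighted decloned graphs are. -/
theorem stmt3 {𝔽 S S' : Type*} [RCLike 𝔽] [Fintype S] [Fintype S']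
    (A : S → S → 𝔽) (A' : S' → S' → 𝔽)
    (hA : ∀ s t, A s t = -A t s) (hA' : ∀ s t, A' s t = -A' t s) :
    (∃ Φ : S → S', Function.Bijective Φ ∧ IsGraphMorphism A A' Φ) ↔
    (∃ Ψ : Quotient (declSetoid A) → Quotient (declSetoid A'),
      Function.Bijective Ψ ∧ IsGraphMorphism (declAdj A hA) (declAdj A' hA') Ψ ∧
      ∀ q, declWeight A' (Ψ q) = declWeight A q) := by
  constructor
  · rintro ⟨Φ, hΦbij, hΦ⟩
    have hwd : ∀ s t : S, skewRel A s t → skewRel A' (Φ s) (Φ t) := by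
      intro s t hst u'
      obtain ⟨u, rfl⟩ := hΦbij.2 u'
      rw [hΦ s u, hΦ t u]; exact hst u
    refine ⟨Quotient.lift (fun s => Quotient.mk (declSetoid A') (Φ s))
        (fun s t h => Quotient.sound (hwd s t h)), ⟨?_, ?_⟩, ?_, ?_⟩
    · intro q q' h
      induction q using Quotient.ind
      induction q' using Quotient.ind
      rename_i s t
      refine Quotient.sound (fun u => ?_)
      have h' : skewRel A' (Φ s) (Φ t) := Quotient.exact h
      rw [← hΦ s u, ← hΦ t u]; exact h' (Φ u)
    · intro q'
      induction q' using Quotient.ind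
      rename_i u
      obtain ⟨s, rfl⟩ := hΦbij.2 u
      exact ⟨Quotient.mk _ s, rfl⟩
    · intro q q'
      induction q using Quotient.ind
      induction q' using Quotient.ind
      exact hΦ _ _
    · intro q
      induction q using Quotient.ind
      rename_i s
      refine (Nat.card_eq_of_bijective
        (f := fun x : {t : S // Quotient.mk (declSetoid A) t = Quotient.mk (declSetoid A) s} =>
          (⟨Φ x.1, Quotient.sound (hwd x.1 s (Quotient.exact x.2))⟩ :
            {t : S' // Quotient.mk (declSetoid A') t =
              Quotient.lift (fun s => Quotient.mk (declSetoid A') (Φ s))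
                (fun s t h => Quotient.sound (hwd s t h)) (Quotient.mk (declSetoid A) s)}))
        ⟨?_, ?_⟩).symm
      · intro x y hxy
        exact Subtype.ext (hΦbij.1 (congrArg Subtype.val hxy))
      · rintro ⟨u, hu⟩
        obtain ⟨t, rfl⟩ := hΦbij.2 u
        have ht : skewRel A' (Φ t) (Φ s) := Quotient.exact hu
        refine ⟨⟨t, Quotient.sound (fun v => ?_)⟩, rfl⟩
        rw [← hΦ t v, ← hΦ s v]; exact ht (Φ v)
  · rintro ⟨Ψ, hΨbij, hΨ, hw⟩
    have key : ∀ q : Quotient (declSetoid A),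
        Nonempty ({t : S // Quotient.mk (declSetoid A) t = q} ≃
          {t : S' // Quotient.mk (declSetoid A') t = Ψ q}) :=
      fun q => Finite.card_eq.mp ((hw q).symm)
    let e := fun q => (key q).some
    set Φ : S → S' := fun s => (e (Quotient.mk (declSetoid A) s) ⟨s, rfl⟩).1 with hΦdef
    have haux : ∀ (t : S) (q) (h : Quotient.mk (declSetoid A) t = q),
        ((e q) ⟨t, h⟩).1 = Φ t := by
      intro t q h; subst h; rfl
    have hmem : ∀ s : S, Quotient.mk (declSetoid A') (Φ s) = Ψ (Quotient.mk (declSetoid A) s) :=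
      fun s => (e (Quotient.mk (declSetoid A) s) ⟨s, rfl⟩).2
    refine ⟨Φ, ⟨?_, ?_⟩, ?_⟩
    · intro s t hst
      have hq : Quotient.mk (declSetoid A) s = Quotient.mk (declSetoid A) t := by
        apply hΨbij.1
        rw [← hmem s, ← hmem t, hst]
      have h1 : ((e (Quotient.mk (declSetoid A) s)) ⟨t, hq.symm⟩).1 = Φ t := haux t _ hq.symm
      have h2 : (⟨s, rfl⟩ : {u : S // Quotient.mk (declSetoid A) u = Quotient.mk (declSetoid A) s})
          = ⟨t, hq.symm⟩ := by
        apply (e (Quotient.mk (declSetoid A) s)).injective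
        apply Subtype.ext
        rw [h1]; exact hst
      exact congrArg Subtype.val h2
    · intro u
      obtain ⟨q, hq⟩ := hΨbij.2 (Quotient.mk (declSetoid A') u)
      obtain ⟨⟨t, ht⟩, hb⟩ := (e q).surjective ⟨u, hq.symm⟩
      refine ⟨t, ?_⟩
      have := haux t q ht
      rw [hb] at this
      exact this.symm
    · intro s t
      have : A' (Φ s) (Φ t)
          = declAdj A' hA' (Quotient.mk (declSetoid A') (Φ s)) (Quotient.mk (declSetoid A') (Φ t)) :=
        rfl
      rw [this, hmem, hmem]
      exact hΨ _ _
end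

section
/- Let Γ = (S,A) be a skew-symmetric graph over 𝔽 with weighted decloned graph (Γ̄,ϖ_Γ), Γ̄ = (S̄,Ā), and decloning map p : S → S̄. The map δ : Aut(Γ) → Aut(Γ̄,ϖ_Γ) sending a graph automorphism Φ to the unique map Φ̄ with p ∘ Φ = Φ̄ ∘ p is a surjective group homomorphism that admits a group-homomorphism section; its kernel is exactly the set of graph automorphisms Φ of Γ satisfying Φ(s) ~ s for all s ∈ S, and this kernel is isomorphic as a group to the direct product ∏_{s̄ ∈ S̄} Sym(s̄) of the symmetric groups on the equivalence classes. Consequently Aut(Γ) is isomorphic to a semidirect product (∏_{s̄ ∈ S̄} Sym(ϖ_Γ(s̄))) ⋊ Aut(Γ̄,ϖ_Γ). -/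
open scoped BigOperators

attribute [local instance] Classical.propDecidable

/-- The group of graph automorphisms of the skew-symmetric graph `(S, A)`. -/
def graphAutSubgroup {𝔽 S : Type*} (A : S → S → 𝔽) : Subgroup (Equiv.Perm S) where
  carrier := {Φ | ∀ s t, A (Φ s) (Φ t) = A s t}
  one_mem' := fun _ _ => rfl
  mul_mem' := by
    intro a b ha hb s t
    simpa [Equiv.Perm.mul_apply] using (ha (b s) (b t)).trans (hb s t)
  inv_mem' := by
    intro a ha s t
    have := ha (a⁻¹ s) (a⁻¹ t)
    simpa using this.symm

/-- The group of weighted graph automorphisms of a weighted skew-symmetric graph. -/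
def wAutSubgroup {𝔽 Q : Type*} (B : Q → Q → 𝔽) (w : Q → ℕ) : Subgroup (Equiv.Perm Q) where
  carrier := {Ψ | (∀ q r, B (Ψ q) (Ψ r) = B q r) ∧ ∀ q, w (Ψ q) = w q}
  one_mem' := ⟨fun _ _ => rfl, fun _ => rfl⟩
  mul_mem' := by
    intro a b ha hb
    refine ⟨fun q r => ?_, fun q => ?_⟩
    · simpa [Equiv.Perm.mul_apply] using (ha.1 (b q) (b r)).trans (hb.1 q r)
    · simpa [Equiv.Perm.mul_apply] using (ha.2 (b q)).trans (hb.2 q)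
  inv_mem' := by
    intro a ha
    refine ⟨fun q r => ?_, fun q => ?_⟩
    · simpa using (ha.1 (a⁻¹ q) (a⁻¹ r)).symm
    · simpa using (ha.2 (a⁻¹ q)).symm


set_option linter.unusedSectionVars false

section Aux

variable {𝔽 S : Type*} [RCLike 𝔽] [Fintype S] (A : S → S → 𝔽) (hA : ∀ s t, A s t = -A t s)

lemma graphAut_rel {Φ : Equiv.Perm S} (hΦ : Φ ∈ graphAutSubgroup A) {s t : S}
    (h : skewRel A s t) : skewRel A (Φ s) (Φ t) := fun u => by
  calc A (Φ s) u = A (Φ s) (Φ (Φ.symm u)) := by rw [Equiv.apply_symm_apply]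
  _ = A s (Φ.symm u) := hΦ s (Φ.symm u)
  _ = A t (Φ.symm u) := h _
  _ = A (Φ t) u := by rw [← hΦ t (Φ.symm u), Equiv.apply_symm_apply]

/-- The descended permutation on the quotient. -/
def descPerm (Φ : graphAutSubgroup A) : Equiv.Perm (Quotient (declSetoid A)) where
  toFun := Quotient.map (Φ : Equiv.Perm S) (fun _ _ h => graphAut_rel A Φ.2 h)
  invFun := Quotient.map ((Φ⁻¹ : graphAutSubgroup A) : Equiv.Perm S)
    (fun _ _ h => graphAut_rel A (Φ⁻¹).2 h)
  left_inv := by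
    intro q
    induction q using Quotient.ind
    simp [Quotient.map_mk]
    exact congrArg (Quotient.mk (declSetoid A)) (Equiv.symm_apply_apply _ _)
  right_inv := by
    intro q
    induction q using Quotient.ind
    simp [Quotient.map_mk]
    exact congrArg (Quotient.mk (declSetoid A)) (Equiv.apply_symm_apply _ _)

lemma descPerm_mk (Φ : graphAutSubgroup A) (s : S) :
    descPerm A Φ (Quotient.mk (declSetoid A) s) = Quotient.mk _ ((Φ : Equiv.Perm S) s) := rfl

lemma descPerm_mem (Φ : graphAutSubgroup A) :
    descPerm A Φ ∈ wAutSubgroup (declAdj A hA) (declWeight A) := by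
  constructor
  · intro q r
    induction q using Quotient.ind
    induction r using Quotient.ind
    exact Φ.2 _ _
  · intro q
    induction q using Quotient.ind
    rename_i s
    refine (Nat.card_congr ?_).symm
    refine Equiv.subtypeEquiv (Φ : Equiv.Perm S) fun t => ?_
    exact (Equiv.apply_eq_iff_eq (descPerm A Φ)).symm

/-- The projection homomorphism δ. -/
noncomputable def δhom : graphAutSubgroup A →* wAutSubgroup (declAdj A hA) (declWeight A) where
  toFun Φ := ⟨descPerm A Φ, descPerm_mem A hA Φ⟩
  map_one' := by
    refine Subtype.ext (Equiv.ext fun q => ?_)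
    induction q using Quotient.ind
    rfl
  map_mul' Φ Ψ := by
    refine Subtype.ext (Equiv.ext fun q => ?_)
    induction q using Quotient.ind
    rfl

/-- A chosen identification of each clone-class with `Fin` of its weight. -/
noncomputable def fEquiv (q : Quotient (declSetoid A)) :
    {t : S // Quotient.mk (declSetoid A) t = q} ≃ Fin (declWeight A q) :=
  (Fintype.equivFin _).trans (finCongr (Nat.card_eq_fintype_card (α := {t : S // Quotient.mk (declSetoid A) t = q})).symm)

noncomputable def codeOf (s : S) : ℕ :=
  (fEquiv A (Quotient.mk (declSetoid A) s) ⟨s, rfl⟩ : Fin _)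

lemma fEquiv_val_congr {q q' : Quotient (declSetoid A)} (h : q = q') (t : S)
    (ht : Quotient.mk (declSetoid A) t = q) :
    ((fEquiv A q' ⟨t, ht.trans h⟩ : Fin _) : ℕ) = fEquiv A q ⟨t, ht⟩ := by subst h; rfl

lemma code_unique {s t : S}
    (h : Quotient.mk (declSetoid A) s = Quotient.mk (declSetoid A) t)
    (hc : codeOf A s = codeOf A t) : s = t := by
  have h1 : ((fEquiv A (Quotient.mk (declSetoid A) t) ⟨s, h⟩ : Fin _) : ℕ) = codeOf A s :=
    fEquiv_val_congr A h s rfl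
  have h2 : fEquiv A (Quotient.mk (declSetoid A) t) ⟨s, h⟩
      = fEquiv A (Quotient.mk (declSetoid A) t) ⟨t, rfl⟩ := Fin.ext (by rw [h1, hc]; rfl)
  exact congrArg Subtype.val ((fEquiv A _).injective h2)

/-- The underlying function of the canonical section. -/
noncomputable def secFun (Ψ : wAutSubgroup (declAdj A hA) (declWeight A)) (s : S) : S :=
  ((fEquiv A ((Ψ : Equiv.Perm (Quotient (declSetoid A))) (Quotient.mk (declSetoid A) s))).symm
    (finCongr (Ψ.2.2 _).symm (fEquiv A _ ⟨s, rfl⟩))).1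

lemma secFun_mk (Ψ : wAutSubgroup (declAdj A hA) (declWeight A)) (s : S) :
    Quotient.mk (declSetoid A) (secFun A hA Ψ s)
      = (Ψ : Equiv.Perm (Quotient (declSetoid A))) (Quotient.mk (declSetoid A) s) :=
  ((fEquiv A _).symm _).2

lemma secFun_code (Ψ : wAutSubgroup (declAdj A hA) (declWeight A)) (s : S) :
    codeOf A (secFun A hA Ψ s) = codeOf A s := by
  have h := secFun_mk A hA Ψ s
  have h1 : codeOf A (secFun A hA Ψ s)
      = ((fEquiv A ((Ψ : Equiv.Perm (Quotient (declSetoid A))) (Quotient.mk (declSetoid A) s))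
          ⟨secFun A hA Ψ s, h⟩ : Fin _) : ℕ) := (fEquiv_val_congr A h _ rfl).symm
  rw [h1]
  have h2 : (⟨secFun A hA Ψ s, h⟩ :
      {t : S // Quotient.mk (declSetoid A) t
        = (Ψ : Equiv.Perm (Quotient (declSetoid A))) (Quotient.mk (declSetoid A) s)})
      = (fEquiv A _).symm (finCongr (Ψ.2.2 _).symm (fEquiv A _ ⟨s, rfl⟩)) :=
    Subtype.ext rfl
  rw [h2, Equiv.apply_symm_apply]
  rfl

lemma secFun_unique (Ψ : wAutSubgroup (declAdj A hA) (declWeight A)) (s t : S)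
    (h : Quotient.mk (declSetoid A) t
      = (Ψ : Equiv.Perm (Quotient (declSetoid A))) (Quotient.mk (declSetoid A) s))
    (hc : codeOf A t = codeOf A s) : t = secFun A hA Ψ s :=
  code_unique A (h.trans (secFun_mk A hA Ψ s).symm) (hc.trans (secFun_code A hA Ψ s).symm)

lemma secFun_secFun (Ψ₂ Ψ₁ : wAutSubgroup (declAdj A hA) (declWeight A)) (s : S) :
    secFun A hA Ψ₂ (secFun A hA Ψ₁ s) = secFun A hA (Ψ₂ * Ψ₁) s := by
  refine secFun_unique A hA _ _ _ ?_ ?_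
  · rw [secFun_mk, secFun_mk]; rfl
  · rw [secFun_code, secFun_code]

noncomputable def secPerm (Ψ : wAutSubgroup (declAdj A hA) (declWeight A)) : Equiv.Perm S where
  toFun := secFun A hA Ψ
  invFun := secFun A hA Ψ⁻¹
  left_inv := by
    intro s
    rw [secFun_secFun, inv_mul_cancel]
    refine ((secFun_unique A hA 1 s s ?_ rfl).symm)
    rfl
  right_inv := by
    intro s
    rw [secFun_secFun, mul_inv_cancel]
    refine ((secFun_unique A hA 1 s s ?_ rfl).symm)
    rfl

lemma secPerm_mem (Ψ : wAutSubgroup (declAdj A hA) (declWeight A)) :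
    secPerm A hA Ψ ∈ graphAutSubgroup A := by
  intro s t
  have key : declAdj A hA (Quotient.mk (declSetoid A) (secFun A hA Ψ s))
      (Quotient.mk (declSetoid A) (secFun A hA Ψ t))
      = declAdj A hA (Quotient.mk (declSetoid A) s) (Quotient.mk (declSetoid A) t) := by
    rw [secFun_mk, secFun_mk]
    exact Ψ.2.1 _ _
  exact key

noncomputable def σhom : wAutSubgroup (declAdj A hA) (declWeight A) →* graphAutSubgroup A where
  toFun Ψ := ⟨secPerm A hA Ψ, secPerm_mem A hA Ψ⟩
  map_one' := by
    refine Subtype.ext (Equiv.ext fun s => ?_)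
    exact (secFun_unique A hA 1 s s rfl rfl).symm
  map_mul' Ψ₂ Ψ₁ := by
    refine Subtype.ext (Equiv.ext fun s => ?_)
    exact (secFun_secFun A hA Ψ₂ Ψ₁ s).symm

lemma δ_σ (Ψ : wAutSubgroup (declAdj A hA) (declWeight A)) :
    δhom A hA (σhom A hA Ψ) = Ψ := by
  refine Subtype.ext (Equiv.ext fun q => ?_)
  induction q using Quotient.ind
  exact secFun_mk A hA Ψ _

end Aux

section Ker

variable {𝔽 S : Type*} [RCLike 𝔽] [Fintype S] (A : S → S → 𝔽) (hA : ∀ s t, A s t = -A t s)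

lemma mem_ker_iff (Φ : graphAutSubgroup A) :
    Φ ∈ (δhom A hA).ker ↔ ∀ s : S, skewRel A ((Φ : Equiv.Perm S) s) s := by
  rw [MonoidHom.mem_ker]
  constructor
  · intro h s
    have h2 : descPerm A Φ (Quotient.mk (declSetoid A) s) = Quotient.mk (declSetoid A) s := by
      rw [show descPerm A Φ = ((δhom A hA Φ : wAutSubgroup (declAdj A hA) (declWeight A)) :
        Equiv.Perm (Quotient (declSetoid A))) from rfl, h]
      rfl
    exact Quotient.exact h2
  · intro h
    refine Subtype.ext (Equiv.ext fun q => ?_)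
    induction q using Quotient.ind
    exact Quotient.sound (h _)

variable {A} in
/-- The permutation of `S` induced by a family of permutations of the clone-classes. -/
noncomputable def kerFun
    (π : ∀ q : Quotient (declSetoid A), Equiv.Perm {t : S // Quotient.mk (declSetoid A) t = q})
    (s : S) : S :=
  (π (Quotient.mk (declSetoid A) s) ⟨s, rfl⟩).1

lemma kerFun_mk
    (π : ∀ q : Quotient (declSetoid A), Equiv.Perm {t : S // Quotient.mk (declSetoid A) t = q})
    (s : S) : Quotient.mk (declSetoid A) (kerFun π s) = Quotient.mk (declSetoid A) s :=
  (π (Quotient.mk (declSetoid A) s) ⟨s, rfl⟩).2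

lemma pi_val_congr
    (π : ∀ q : Quotient (declSetoid A), Equiv.Perm {t : S // Quotient.mk (declSetoid A) t = q})
    {q q' : Quotient (declSetoid A)} (h : q = q') (t : S)
    (ht : Quotient.mk (declSetoid A) t = q) :
    (π q' ⟨t, ht.trans h⟩).1 = (π q ⟨t, ht⟩).1 := by subst h; rfl

lemma kerFun_mul
    (π π' : ∀ q : Quotient (declSetoid A), Equiv.Perm {t : S // Quotient.mk (declSetoid A) t = q})
    (s : S) : kerFun (π * π') s = kerFun π (kerFun π' s) := by
  show (π (Quotient.mk (declSetoid A) s) (π' (Quotient.mk (declSetoid A) s) ⟨s, rfl⟩)).1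
    = (π (Quotient.mk (declSetoid A) (kerFun π' s)) ⟨kerFun π' s, rfl⟩).1
  rw [← pi_val_congr A π (kerFun_mk A π' s) (kerFun π' s) rfl]
  exact congrArg (fun z => ((π (Quotient.mk (declSetoid A) s)) z).1) (Subtype.ext rfl)

lemma kerFun_one (s : S) :
    kerFun (1 : ∀ q : Quotient (declSetoid A),
      Equiv.Perm {t : S // Quotient.mk (declSetoid A) t = q}) s = s := rfl

variable {A} in
noncomputable def kerPerm
    (π : ∀ q : Quotient (declSetoid A), Equiv.Perm {t : S // Quotient.mk (declSetoid A) t = q}) :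
    Equiv.Perm S where
  toFun := kerFun π
  invFun := kerFun π⁻¹
  left_inv := fun s => by rw [← kerFun_mul, inv_mul_cancel, kerFun_one]
  right_inv := fun s => by rw [← kerFun_mul, mul_inv_cancel, kerFun_one]

include hA in
lemma kerPerm_mem
    (π : ∀ q : Quotient (declSetoid A), Equiv.Perm {t : S // Quotient.mk (declSetoid A) t = q}) :
    kerPerm π ∈ graphAutSubgroup A := by
  intro s t
  have key : declAdj A hA (Quotient.mk (declSetoid A) (kerFun π s))
      (Quotient.mk (declSetoid A) (kerFun π t))
      = declAdj A hA (Quotient.mk (declSetoid A) s) (Quotient.mk (declSetoid A) t) := by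
    rw [kerFun_mk, kerFun_mk]
  exact key

noncomputable def Khom :
    (∀ q : Quotient (declSetoid A), Equiv.Perm {t : S // Quotient.mk (declSetoid A) t = q}) →*
      (δhom A hA).ker where
  toFun π := ⟨⟨kerPerm π, kerPerm_mem A hA π⟩, by
    rw [mem_ker_iff]
    intro s
    exact Quotient.exact (kerFun_mk A π s)⟩
  map_one' := by
    refine Subtype.ext (Subtype.ext (Equiv.ext fun s => ?_))
    exact kerFun_one A s
  map_mul' π π' := by
    refine Subtype.ext (Subtype.ext (Equiv.ext fun s => ?_))
    exact kerFun_mul A π π' s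

lemma Khom_bij : Function.Bijective (Khom A hA) := by
  constructor
  · rw [injective_iff_map_eq_one]
    intro π hπ
    have h : ∀ s : S, kerFun π s = s := by
      intro s
      have := congrArg (fun x => (((x : (δhom A hA).ker) : graphAutSubgroup A) : Equiv.Perm S) s) hπ
      exact this
    funext q
    refine Equiv.ext fun x => ?_
    refine Subtype.ext ?_
    have hx : Quotient.mk (declSetoid A) x.1 = q := x.2
    have h1 : (π q ⟨x.1, (rfl : Quotient.mk (declSetoid A) x.1 = _).trans hx⟩).1
        = (π (Quotient.mk (declSetoid A) x.1) ⟨x.1, rfl⟩).1 := pi_val_congr A π hx x.1 rfl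
    have h2 : (⟨x.1, (rfl : Quotient.mk (declSetoid A) x.1 = _).trans hx⟩ :
        {t : S // Quotient.mk (declSetoid A) t = q}) = x := Subtype.ext rfl
    rw [h2] at h1
    rw [h1]
    exact h x.1
  · rintro ⟨Φ, hΦ⟩
    rw [mem_ker_iff] at hΦ
    have hm : ∀ s : S, Quotient.mk (declSetoid A) ((Φ : Equiv.Perm S) s)
        = Quotient.mk (declSetoid A) s := fun s => Quotient.sound (hΦ s)
    have hminv : ∀ s : S, Quotient.mk (declSetoid A) ((Φ : Equiv.Perm S)⁻¹ s)
        = Quotient.mk (declSetoid A) s := by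
      intro s
      rw [← hm ((Φ : Equiv.Perm S)⁻¹ s), ← Equiv.Perm.mul_apply, mul_inv_cancel, Equiv.Perm.one_apply]
    refine ⟨fun q => ⟨fun x => ⟨(Φ : Equiv.Perm S) x.1, by rw [hm]; exact x.2⟩,
      fun x => ⟨(Φ : Equiv.Perm S)⁻¹ x.1, by rw [hminv]; exact x.2⟩,
      fun x => Subtype.ext (by simp), fun x => Subtype.ext (by simp)⟩, ?_⟩
    refine Subtype.ext (Subtype.ext (Equiv.ext fun s => ?_))
    rfl

end Ker

def permMulCongr {α β : Type*} (e : α ≃ β) : Equiv.Perm α ≃* Equiv.Perm β where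
  toEquiv := e.permCongr
  map_mul' p q := by
    ext x
    simp [Equiv.permCongr_apply]

theorem sdp_aux {G H N : Type*} [Group G] [Group H] [Group N]
    (δ : G →* H) (σ : H →* G) (hσ : ∀ h, δ (σ h) = h) (μ : δ.ker ≃* N) :
    ∃ act : H →* MulAut N, Nonempty (G ≃* N ⋊[act] H) := by
  let act : H →* MulAut N := (MulAut.congr μ).toMonoidHom.comp (MulAut.conjNormal.comp σ)
  have hact : ∀ h n, (act h n : N) = μ (⟨σ h * (μ.symm n : G) * (σ h)⁻¹, by
      have : (μ.symm n : G) ∈ δ.ker := (μ.symm n).2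
      simp only [MonoidHom.mem_ker] at this ⊢
      simp [this, hσ]⟩ : δ.ker) := by
    intro h n
    show μ (MulAut.conjNormal (σ h) (μ.symm n)) = _
    congr 1
  let f₁ : N →* G := δ.ker.subtype.comp μ.symm.toMonoidHom
  have cond : ∀ h, f₁.comp (act h).toMonoidHom = (MulAut.conj (σ h)).toMonoidHom.comp f₁ := by
    intro h
    ext n
    simp only [MonoidHom.comp_apply, MulEquiv.coe_toMonoidHom, MulAut.conj_apply]
    rw [hact]
    simp [f₁]
  let L := SemidirectProduct.lift f₁ σ cond
  have hL : ∀ x : N ⋊[act] H, L x = f₁ x.1 * σ x.2 := fun x => rfl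
  have hinj : Function.Injective L := by
    rw [injective_iff_map_eq_one]
    intro a ha
    rw [hL] at ha
    have h2 : a.2 = 1 := by
      have := congrArg δ ha
      have hk : δ (f₁ a.1) = 1 := (μ.symm a.1).2
      simpa [hk, hσ] using this
    have h1 : a.1 = 1 := by
      rw [h2] at ha
      simp only [map_one, mul_one] at ha
      have : μ.symm a.1 = 1 := Subtype.ext (by simpa [f₁] using ha)
      simpa using congrArg μ this
    cases a
    simp_all
  have hsurj : Function.Surjective L := by
    intro g
    refine ⟨⟨μ ⟨g * (σ (δ g))⁻¹, by simp [MonoidHom.mem_ker, hσ]⟩, δ g⟩, ?_⟩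
    rw [hL]
    simp [f₁, mul_assoc]
  exact ⟨act, ⟨(MulEquiv.ofBijective L ⟨hinj, hsurj⟩).symm⟩⟩


/-- Proposition 2.9: the split short exact sequence describing `Aut(Γ)`. -/
theorem stmt4 {𝔽 S : Type*} [RCLike 𝔽] [Fintype S]
    (A : S → S → 𝔽) (hA : ∀ s t, A s t = -A t s) :
    ∃ δ : ↥(graphAutSubgroup A) →* ↥(wAutSubgroup (declAdj A hA) (declWeight A)),
      (∀ (Φ : ↥(graphAutSubgroup A)) (s : S),
          ((δ Φ : Equiv.Perm (Quotient (declSetoid A))))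
              (Quotient.mk (declSetoid A) s)
            = Quotient.mk (declSetoid A) ((Φ : Equiv.Perm S) s)) ∧
      Function.Surjective δ ∧
      (∃ σ : ↥(wAutSubgroup (declAdj A hA) (declWeight A)) →* ↥(graphAutSubgroup A),
          ∀ g, δ (σ g) = g) ∧
      (∀ Φ : ↥(graphAutSubgroup A),
          Φ ∈ δ.ker ↔ ∀ s : S, skewRel A ((Φ : Equiv.Perm S) s) s) ∧
      Nonempty (↥δ.ker ≃*
        ∀ q : Quotient (declSetoid A),
          Equiv.Perm {t : S // Quotient.mk (declSetoid A) t = q}) ∧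
      ∃ act : ↥(wAutSubgroup (declAdj A hA) (declWeight A)) →*
          MulAut (∀ q : Quotient (declSetoid A), Equiv.Perm (Fin (declWeight A q))),
        Nonempty (↥(graphAutSubgroup A) ≃*
          SemidirectProduct
            (∀ q : Quotient (declSetoid A), Equiv.Perm (Fin (declWeight A q)))
            (↥(wAutSubgroup (declAdj A hA) (declWeight A))) act) := by
  refine ⟨δhom A hA, fun Φ s => rfl, ?_, ⟨σhom A hA, δ_σ A hA⟩, mem_ker_iff A hA, ?_, ?_⟩
  · intro Ψ
    exact ⟨σhom A hA Ψ, δ_σ A hA Ψ⟩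
  · exact ⟨(MulEquiv.ofBijective (Khom A hA) (Khom_bij A hA)).symm⟩
  · exact sdp_aux (δhom A hA) (σhom A hA) (δ_σ A hA)
      (((MulEquiv.ofBijective (Khom A hA) (Khom_bij A hA)).symm).trans
        (MulEquiv.piCongrRight fun q => permMulCongr (fEquiv A q)))
end

section
/- Let A and A' be skew-symmetric real matrices indexed by a finite set S. If φ : ℝ^S → ℝ^S is a smooth isomorphism of LV systems from (ℝ^S,A) to (ℝ^S,A'), then the total derivative d₀φ of φ at the origin is a bijective linear map that is itself an LV morphism from (ℝ^S,A) to (ℝ^S,A'): writing (d₀φ)(x)_u = ∑_s B(u,s) x_s, one has ∑_{s,t∈S} A(s,t) B(u,s) B(v,t) x_s x_t = A'(u,v) (d₀φ(x))_u (d₀φ(x))_v for all u,v ∈ S and x ∈ ℝ^S, and ∑_{u∈S} (d₀φ(x))_u = ∑_{s∈S} x_s for all x. -/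
attribute [local instance] Classical.propDecidable

/-- A smooth morphism of LV systems over `ℝ`: a smooth map which is a Poisson map for the
quadratic Poisson structures attached to `A`, `A'` and which preserves the Hamiltonians. -/
def IsSmoothLVMorphism {S S' : Type*} [Fintype S] [Fintype S']
    (A : S → S → ℝ) (A' : S' → S' → ℝ) (φ : (S → ℝ) → (S' → ℝ)) : Prop :=
  ContDiff ℝ (⊤ : ℕ∞) φ ∧
  (∀ u v, ∀ x : S → ℝ,
      ∑ s, ∑ t, A s t * x s * x t
          * fderiv ℝ (fun y => φ y u) x (Pi.single s 1)
          * fderiv ℝ (fun y => φ y v) x (Pi.single t 1)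
        = A' u v * φ x u * φ x v) ∧
  ∀ x : S → ℝ, ∑ u, φ x u = ∑ s, x s

/-- A smooth isomorphism of LV systems: a smooth morphism which is a diffeomorphism. -/
def IsSmoothLVIsomorphism {S S' : Type*} [Fintype S] [Fintype S']
    (A : S → S → ℝ) (A' : S' → S' → ℝ) (φ : (S → ℝ) → (S' → ℝ)) : Prop :=
  IsSmoothLVMorphism A A' φ ∧
  ∃ ψ : (S' → ℝ) → (S → ℝ), ContDiff ℝ (⊤ : ℕ∞) ψ ∧
    Function.LeftInverse ψ φ ∧ Function.RightInverse ψ φ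

/-- Proposition 3.1: a smooth isomorphism of LV systems linearizes -- its differential at the
origin is a (linear, bijective) LV isomorphism. -/
theorem stmt5 {S : Type*} [Fintype S]
    (A A' : S → S → ℝ)
    (hA : ∀ s t, A s t = -A t s) (hA' : ∀ s t, A' s t = -A' t s)
    (φ : (S → ℝ) → (S → ℝ))
    (hφ : IsSmoothLVIsomorphism A A' φ) :
    Function.Bijective ⇑(fderiv ℝ φ 0) ∧
    (∀ u v, ∀ x : S → ℝ,
        ∑ s, ∑ t, A s t * fderiv ℝ φ 0 (Pi.single s 1) u * fderiv ℝ φ 0 (Pi.single t 1) v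
            * x s * x t
          = A' u v * fderiv ℝ φ 0 x u * fderiv ℝ φ 0 x v) ∧
    ∀ x : S → ℝ, ∑ u, fderiv ℝ φ 0 x u = ∑ s, x s := by
  obtain ⟨⟨hsm, hpois, hham⟩, ψ, hψsm, hlinv, hrinv⟩ := hφ
  have hφd : Differentiable ℝ φ := hsm.differentiable (by simp)
  have hψd : Differentiable ℝ ψ := hψsm.differentiable (by simp)
  have projD : ∀ (w : S) (z : S → ℝ), HasFDerivAt (fun y : S → ℝ => y w)
      ((ContinuousLinearMap.proj w : (S → ℝ) →L[ℝ] ℝ)) z := fun w z =>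
    (ContinuousLinearMap.proj w : (S → ℝ) →L[ℝ] ℝ).hasFDerivAt
  -- Bijectivity of the differential at 0
  have hψ0 : ψ (φ 0) = 0 := hlinv 0
  have hid1' : (fderiv ℝ ψ (φ 0)).comp (fderiv ℝ φ 0) = ContinuousLinearMap.id ℝ (S → ℝ) := by
    have hid1 : HasFDerivAt (ψ ∘ φ) ((fderiv ℝ ψ (φ 0)).comp (fderiv ℝ φ 0)) 0 :=
      ((hψd (φ 0)).hasFDerivAt).comp 0 (hφd 0).hasFDerivAt
    have h : HasFDerivAt (id : (S → ℝ) → S → ℝ)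
        ((fderiv ℝ ψ (φ 0)).comp (fderiv ℝ φ 0)) 0 := by
      have he : (ψ ∘ φ) = id := funext hlinv
      rwa [he] at hid1
    exact h.unique (hasFDerivAt_id 0)
  have hid2' : (fderiv ℝ φ 0).comp (fderiv ℝ ψ (φ 0)) = ContinuousLinearMap.id ℝ (S → ℝ) := by
    have hid2 : HasFDerivAt (φ ∘ ψ) ((fderiv ℝ φ 0).comp (fderiv ℝ ψ (φ 0))) (φ 0) := by
      have h0 : HasFDerivAt φ (fderiv ℝ φ 0) (ψ (φ 0)) := by
        rw [hψ0]; exact (hφd 0).hasFDerivAt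
      exact h0.comp (φ 0) (hψd (φ 0)).hasFDerivAt
    have h : HasFDerivAt (id : (S → ℝ) → S → ℝ)
        ((fderiv ℝ φ 0).comp (fderiv ℝ ψ (φ 0))) (φ 0) := by
      have he : (φ ∘ ψ) = id := funext hrinv
      rwa [he] at hid2
    exact h.unique (hasFDerivAt_id (φ 0))
  have hleft : ∀ z, fderiv ℝ ψ (φ 0) (fderiv ℝ φ 0 z) = z := by
    intro z
    have := ContinuousLinearMap.ext_iff.mp hid1' z
    simpa using this
  have hright : ∀ z, fderiv ℝ φ 0 (fderiv ℝ ψ (φ 0) z) = z := by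
    intro z
    have := ContinuousLinearMap.ext_iff.mp hid2' z
    simpa using this
  have hbij : Function.Bijective ⇑(fderiv ℝ φ 0) := by
    constructor
    · intro a b hab
      rw [← hleft a, ← hleft b, hab]
    · intro z
      exact ⟨fderiv ℝ ψ (φ 0) z, hright z⟩
  -- component derivative lemma
  have hcomp : ∀ (u : S) (z ξ : S → ℝ),
      fderiv ℝ (fun y => φ y u) z ξ = fderiv ℝ φ z ξ u := by
    intro u z ξ
    have h1 : HasFDerivAt (fun y => φ y u)
        ((ContinuousLinearMap.proj u).comp (fderiv ℝ φ z)) z :=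
      (projD u (φ z)).comp z (hφd z).hasFDerivAt
    rw [h1.fderiv]
    rfl
  -- the key scaled identity
  have key : ∀ (u v : S) (x : S → ℝ) (ε : ℝ),
      (∑ s, ∑ t, A s t * x s * x t * fderiv ℝ φ (ε • x) (Pi.single s 1) u
          * fderiv ℝ φ (ε • x) (Pi.single t 1) v) * ε ^ 2
        = A' u v * φ (ε • x) u * φ (ε • x) v := by
    intro u v x ε
    rw [← hpois u v (ε • x), Finset.sum_mul]
    refine Finset.sum_congr rfl fun s _ => ?_
    rw [Finset.sum_mul]
    refine Finset.sum_congr rfl fun t _ => ?_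
    rw [hcomp, hcomp]
    simp only [Pi.smul_apply, smul_eq_mul]
    ring
  -- slope convergence
  have hslope : ∀ (x : S → ℝ) (w : S),
      Filter.Tendsto (fun ε : ℝ => (φ (ε • x) w - φ 0 w) / ε) (nhdsWithin 0 {0}ᶜ)
        (nhds (fderiv ℝ φ 0 x w)) := by
    intro x w
    have hline : HasDerivAt (fun ε : ℝ => ε • x) x 0 := by
      simpa using (hasDerivAt_id (0 : ℝ)).smul_const x
    have h0 : HasFDerivAt φ (fderiv ℝ φ 0) ((0 : ℝ) • x) := by
      rw [zero_smul]; exact (hφd 0).hasFDerivAt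
    have h1 : HasDerivAt (fun ε : ℝ => φ (ε • x)) (fderiv ℝ φ 0 x) 0 :=
      h0.comp_hasDerivAt 0 hline
    have h2 : HasDerivAt (fun ε : ℝ => φ (ε • x) w) (fderiv ℝ φ 0 x w) 0 :=
      by have := (projD w (φ ((0:ℝ) • x))).comp_hasDerivAt 0 h1; exact this
    have h3 := hasDerivAt_iff_tendsto_slope.mp h2
    refine h3.congr fun ε => ?_
    rw [slope_def_field]
    simp [zero_smul]
  -- continuity of the coefficient function
  have hfc : Continuous (fderiv ℝ φ) := hsm.continuous_fderiv (by simp)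
  have hgcont : ∀ (u v : S) (x : S → ℝ),
      Continuous (fun ε : ℝ => ∑ s, ∑ t, A s t * x s * x t
        * fderiv ℝ φ (ε • x) (Pi.single s 1) u * fderiv ℝ φ (ε • x) (Pi.single t 1) v) := by
    intro u v x
    have hc : ∀ (ξ : S → ℝ) (w : S), Continuous (fun ε : ℝ => fderiv ℝ φ (ε • x) ξ w) := by
      intro ξ w
      have h1 : Continuous fun ε : ℝ => fderiv ℝ φ (ε • x) :=
        hfc.comp (continuous_id.smul continuous_const)
      exact (continuous_apply w).comp (h1.clm_apply continuous_const)
    exact continuous_finset_sum _ fun s _ => continuous_finset_sum _ fun t _ =>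
      (continuous_const.mul (hc _ u)).mul (hc _ v)
  -- vanishing of relevant components of φ 0
  have hcc : ∀ u v, A' u v ≠ 0 → φ 0 u * φ 0 v = 0 := by
    intro u v huv
    have h := hpois u v 0
    simp only [Pi.zero_apply, mul_zero, zero_mul, Finset.sum_const_zero] at h
    rcases mul_eq_zero.mp h.symm with h1 | h2
    · rcases mul_eq_zero.mp h1 with h3 | h4
      · exact absurd h3 huv
      · rw [h4, zero_mul]
    · rw [h2, mul_zero]
  have hczero : ∀ u v, A' u v ≠ 0 → φ 0 v = 0 := by
    intro u v huv
    have hne : u ≠ v := by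
      intro h; subst h
      have := hA' u u
      exact huv (by linarith)
    obtain ⟨y, hy⟩ := hbij.2 (Pi.single u 1)
    have hccuv := hcc u v huv
    have T1 : Filter.Tendsto (fun ε : ℝ => ε * (∑ s, ∑ t, A s t * y s * y t
        * fderiv ℝ φ (ε • y) (Pi.single s 1) u * fderiv ℝ φ (ε • y) (Pi.single t 1) v))
        (nhdsWithin 0 {0}ᶜ) (nhds 0) := by
      have h1 := (continuous_id.mul (hgcont u v y)).tendsto 0
      have h2 := h1.mono_left (nhdsWithin_le_nhds (s := {(0:ℝ)}ᶜ))
      simpa [Pi.mul_def] using h2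
    have hu := hslope y u
    have hv := hslope y v
    have hε : Filter.Tendsto (fun ε : ℝ => ε) (nhdsWithin (0:ℝ) {0}ᶜ) (nhds 0) :=
      Filter.tendsto_id.mono_left nhdsWithin_le_nhds
    have T2 : Filter.Tendsto (fun ε : ℝ =>
        A' u v * (φ 0 u * ((φ (ε • y) v - φ 0 v) / ε)
          + φ 0 v * ((φ (ε • y) u - φ 0 u) / ε)
          + ε * (((φ (ε • y) u - φ 0 u) / ε) * ((φ (ε • y) v - φ 0 v) / ε))))
        (nhdsWithin 0 {0}ᶜ)
        (nhds (A' u v * (φ 0 u * fderiv ℝ φ 0 y v + φ 0 v * fderiv ℝ φ 0 y u))) := by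
      have := tendsto_const_nhds (x := A' u v) (f := nhdsWithin (0:ℝ) {0}ᶜ) |>.mul
        (((tendsto_const_nhds (x := φ 0 u) (f := nhdsWithin (0:ℝ) {0}ᶜ)).mul hv |>.add
          ((tendsto_const_nhds (x := φ 0 v) (f := nhdsWithin (0:ℝ) {0}ᶜ)).mul hu)).add
          (hε.mul (hu.mul hv)))
      simpa using this
    have hEq : ∀ᶠ ε in nhdsWithin (0:ℝ) {0}ᶜ,
        ε * (∑ s, ∑ t, A s t * y s * y t
          * fderiv ℝ φ (ε • y) (Pi.single s 1) u * fderiv ℝ φ (ε • y) (Pi.single t 1) v)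
        = A' u v * (φ 0 u * ((φ (ε • y) v - φ 0 v) / ε)
          + φ 0 v * ((φ (ε • y) u - φ 0 u) / ε)
          + ε * (((φ (ε • y) u - φ 0 u) / ε) * ((φ (ε • y) v - φ 0 v) / ε))) := by
      filter_upwards [self_mem_nhdsWithin] with ε hε0
      have hε0' : ε ≠ 0 := hε0
      have hk := key u v y ε
      set a := (φ (ε • y) u - φ 0 u) / ε with ha
      set b := (φ (ε • y) v - φ 0 v) / ε with hb
      have hpu : φ (ε • y) u = φ 0 u + ε * a := by rw [ha]; field_simp; ring
      have hpv : φ (ε • y) v = φ 0 v + ε * b := by rw [hb]; field_simp; ring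
      rw [hpu, hpv] at hk
      refine mul_left_cancel₀ hε0' ?_
      linear_combination hk + A' u v * hccuv
    have huniq := tendsto_nhds_unique (T1.congr' hEq) T2
    -- huniq : 0 = A' u v * (φ 0 u * D y v + φ 0 v * D y u)
    have hyv : fderiv ℝ φ 0 y v = 0 := by
      rw [hy]; exact Pi.single_eq_of_ne (Ne.symm hne) 1
    have hyu : fderiv ℝ φ 0 y u = 1 := by
      rw [hy]; exact Pi.single_eq_same u 1
    rw [hyv, hyu] at huniq
    have : A' u v * φ 0 v = 0 := by linear_combination -huniq
    rcases mul_eq_zero.mp this with h | h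
    · exact absurd h huv
    · exact h
  refine ⟨hbij, ?_, ?_⟩
  · -- the quadratic Poisson identity for the differential
    intro u v x
    have hgoal : (∑ s, ∑ t, A s t * fderiv ℝ φ 0 (Pi.single s 1) u
        * fderiv ℝ φ 0 (Pi.single t 1) v * x s * x t)
        = ∑ s, ∑ t, A s t * x s * x t
          * fderiv ℝ φ ((0:ℝ) • x) (Pi.single s 1) u * fderiv ℝ φ ((0:ℝ) • x) (Pi.single t 1) v := by
      refine Finset.sum_congr rfl fun s _ => Finset.sum_congr rfl fun t _ => ?_
      rw [zero_smul]
      ring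
    by_cases hA'uv : A' u v = 0
    · have T1 : Filter.Tendsto (fun ε : ℝ => ∑ s, ∑ t, A s t * x s * x t
          * fderiv ℝ φ (ε • x) (Pi.single s 1) u * fderiv ℝ φ (ε • x) (Pi.single t 1) v)
          (nhdsWithin 0 {0}ᶜ)
          (nhds (∑ s, ∑ t, A s t * x s * x t
            * fderiv ℝ φ ((0:ℝ) • x) (Pi.single s 1) u * fderiv ℝ φ ((0:ℝ) • x) (Pi.single t 1) v)) :=
        ((hgcont u v x).tendsto 0).mono_left nhdsWithin_le_nhds
      have T2 : Filter.Tendsto (fun ε : ℝ => ∑ s, ∑ t, A s t * x s * x t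
          * fderiv ℝ φ (ε • x) (Pi.single s 1) u * fderiv ℝ φ (ε • x) (Pi.single t 1) v)
          (nhdsWithin 0 {0}ᶜ) (nhds 0) := by
        have hEq : ∀ᶠ ε in nhdsWithin (0:ℝ) {0}ᶜ, (0:ℝ) = ∑ s, ∑ t, A s t * x s * x t
            * fderiv ℝ φ (ε • x) (Pi.single s 1) u * fderiv ℝ φ (ε • x) (Pi.single t 1) v := by
          filter_upwards [self_mem_nhdsWithin] with ε hε0
          have hε0' : ε ≠ 0 := hε0
          have hk := key u v x ε
          rw [hA'uv, zero_mul, zero_mul] at hk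
          have := mul_eq_zero.mp hk
          rcases this with h | h
          · exact h.symm
          · exact absurd h (pow_ne_zero 2 hε0')
        exact tendsto_const_nhds.congr' hEq
      have := tendsto_nhds_unique T1 T2
      rw [hgoal, this, hA'uv, zero_mul, zero_mul]
    · have hcv : φ 0 v = 0 := hczero u v hA'uv
      have hcu : φ 0 u = 0 := by
        refine hczero v u ?_
        rw [hA' v u]
        simpa using hA'uv
      have T1 : Filter.Tendsto (fun ε : ℝ => ∑ s, ∑ t, A s t * x s * x t
          * fderiv ℝ φ (ε • x) (Pi.single s 1) u * fderiv ℝ φ (ε • x) (Pi.single t 1) v)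
          (nhdsWithin 0 {0}ᶜ)
          (nhds (∑ s, ∑ t, A s t * x s * x t
            * fderiv ℝ φ ((0:ℝ) • x) (Pi.single s 1) u * fderiv ℝ φ ((0:ℝ) • x) (Pi.single t 1) v)) :=
        ((hgcont u v x).tendsto 0).mono_left nhdsWithin_le_nhds
      have T2 : Filter.Tendsto (fun ε : ℝ =>
          A' u v * ((φ (ε • x) u - φ 0 u) / ε) * ((φ (ε • x) v - φ 0 v) / ε))
          (nhdsWithin 0 {0}ᶜ)
          (nhds (A' u v * fderiv ℝ φ 0 x u * fderiv ℝ φ 0 x v)) :=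
        (tendsto_const_nhds.mul (hslope x u)).mul (hslope x v)
      have hEq : ∀ᶠ ε in nhdsWithin (0:ℝ) {0}ᶜ,
          (∑ s, ∑ t, A s t * x s * x t
            * fderiv ℝ φ (ε • x) (Pi.single s 1) u * fderiv ℝ φ (ε • x) (Pi.single t 1) v)
          = A' u v * ((φ (ε • x) u - φ 0 u) / ε) * ((φ (ε • x) v - φ 0 v) / ε) := by
        filter_upwards [self_mem_nhdsWithin] with ε hε0
        have hε0' : ε ≠ 0 := hε0
        have hk := key u v x ε
        set a := (φ (ε • x) u - φ 0 u) / ε with ha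
        set b := (φ (ε • x) v - φ 0 v) / ε with hb
        have hpu : φ (ε • x) u = φ 0 u + ε * a := by rw [ha]; field_simp; ring
        have hpv : φ (ε • x) v = φ 0 v + ε * b := by rw [hb]; field_simp; ring
        rw [hpu, hpv, hcu, hcv] at hk
        refine mul_left_cancel₀ (pow_ne_zero 2 hε0') ?_
        linear_combination hk
      have := tendsto_nhds_unique (T1.congr' hEq) T2
      rw [hgoal, this]
  · -- the Hamiltonian (sum) identity
    intro x
    have hF : HasFDerivAt (fun y : S → ℝ => ∑ u, φ y u)
        (∑ u, (ContinuousLinearMap.proj u).comp (fderiv ℝ φ 0)) 0 :=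
      HasFDerivAt.fun_sum fun u _ => (projD u (φ 0)).comp 0 (hφd 0).hasFDerivAt
    have heq : (fun y : S → ℝ => ∑ u, φ y u) = fun y : S → ℝ => ∑ s, y s := funext hham
    have hG : HasFDerivAt (fun y : S → ℝ => ∑ s, y s)
        (∑ s, (ContinuousLinearMap.proj s : (S → ℝ) →L[ℝ] ℝ)) 0 :=
      HasFDerivAt.fun_sum fun s _ => projD s 0
    rw [heq] at hF
    have huniq := hF.unique hG
    have h1 : (∑ u, (ContinuousLinearMap.proj u).comp (fderiv ℝ φ 0)) x
        = ∑ u, fderiv ℝ φ 0 x u := by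
      rw [ContinuousLinearMap.sum_apply]
      rfl
    have h2 : (∑ s, (ContinuousLinearMap.proj s : (S → ℝ) →L[ℝ] ℝ)) x = ∑ s, x s := by
      rw [ContinuousLinearMap.sum_apply]
      rfl
    rw [← h1, huniq, h2]
end

section
/- Let Γ = (S,A) and Γ' = (S',A') be skew-symmetric graphs over 𝔽. If Φ : Γ → Γ' is a graph morphism, then its linear extension LV(Φ) : 𝔽^S → 𝔽^{S'} is an LV morphism from LV(Γ) to LV(Γ'). Moreover, Φ is a graph isomorphism if and only if LV(Φ) is an LV isomorphism. -/
open scoped BigOperators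

attribute [local instance] Classical.propDecidable

/-- Proposition 3.2 (1) and (3): graph morphisms induce LV morphisms, and a graph morphism is an
isomorphism iff the induced LV morphism is. -/
theorem stmt6 {𝔽 S S' : Type*} [RCLike 𝔽] [Fintype S] [Fintype S']
    (A : S → S → 𝔽) (A' : S' → S' → 𝔽)
    (hA : ∀ s t, A s t = -A t s) (hA' : ∀ s t, A' s t = -A' t s)
    (Φ : S → S') (hΦ : IsGraphMorphism A A' Φ) :
    IsLVMorphism A A' (lvExt 𝔽 Φ) ∧
    (Function.Bijective Φ ↔ Function.Bijective ⇑(lvExt 𝔽 Φ)) := by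
  have hφ : ∀ (x : S → 𝔽) u, lvExt 𝔽 Φ x u = ∑ s, if Φ s = u then x s else 0 :=
    fun _ _ => rfl
  have hsingle : ∀ (s : S) (u : S'),
      lvExt 𝔽 Φ (Pi.single s (1 : 𝔽)) u = if Φ s = u then 1 else 0 := by
    intro s u
    rw [hφ, Finset.sum_eq_single s]
    · simp
    · intro t _ hts
      simp [Pi.single_apply, hts]
    · simp
  refine ⟨⟨?_, ?_⟩, ?_, ?_⟩
  · intro u v x
    simp only [hsingle, hφ]
    rw [mul_assoc, Finset.sum_mul_sum, Finset.mul_sum]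
    refine Finset.sum_congr rfl fun s _ => ?_
    rw [Finset.mul_sum]
    refine Finset.sum_congr rfl fun t _ => ?_
    by_cases h1 : Φ s = u <;> by_cases h2 : Φ t = v <;> simp [h1, h2]
    rw [← h1, ← h2, hΦ]
    ring
  · intro x
    simp only [hφ]
    rw [Finset.sum_comm]
    refine Finset.sum_congr rfl fun s _ => ?_
    simp
  · intro hb
    set e := Equiv.ofBijective Φ hb with he
    have hes : ∀ s, e s = Φ s := fun _ => rfl
    have key : ∀ (x : S → 𝔽) u, lvExt 𝔽 Φ x u = x (e.symm u) := by
      intro x u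
      rw [hφ, Finset.sum_eq_single (e.symm u)]
      · rw [← hes]; simp
      · intro t _ ht
        rw [← hes, if_neg]
        intro h
        exact ht (by rw [← h]; simp)
      · simp
    constructor
    · intro x y hxy
      funext s
      have h := congrFun hxy (e s)
      rwa [key, key, Equiv.symm_apply_apply] at h
    · intro y
      exact ⟨y ∘ e, by funext u; rw [key]; simp⟩
  · intro hb
    constructor
    · intro a b hab
      have h1 : lvExt 𝔽 Φ (Pi.single a (1 : 𝔽)) = lvExt 𝔽 Φ (Pi.single b 1) := by
        funext u
        rw [hsingle, hsingle, hab]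
      have h2 := congrFun (hb.1 h1) a
      by_contra hne
      simp [Pi.single_apply, fun h : a = b => hne h] at h2
    · intro u
      obtain ⟨x, hx⟩ := hb.2 (Pi.single u (1 : 𝔽))
      by_contra hc
      push_neg at hc
      have h := congrFun hx u
      rw [hφ] at h
      simp [fun s => hc s, Pi.single_apply] at h
end

section
/- Let Γ = (S,A) and Γ' = (S',A') be skew-symmetric graphs over 𝔽, and let φ : 𝔽^S → 𝔽^{S'} be a linear map with matrix B (so (φ(x))_u = ∑_{s∈S} B(u,s) x_s) satisfying the Poisson condition: for all u,v ∈ S' and all x ∈ 𝔽^S, ∑_{s,t∈S} A(s,t) B(u,s) B(v,t) x_s x_t = A'(u,v) (φ(x))_u (φ(x))_v. Assume that for every u ∈ S' there exists s ∈ S with B(u,s) ≠ 0 (equivalently, the image of φ is not contained in any coordinate hyperplane). If u ≠ v in S' and B(u,s)·B(v,s) ≠ 0 for some s ∈ S, then A'(u,w) = A'(v,w) for all w ∈ S'. -/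
open scoped BigOperators

/-- Lemma 3.4 (key lemma): if a linear Poisson morphism has two columns overlapping in some
row, then the corresponding target vertices have identical rows of `A'`. -/
theorem stmt7 {𝔽 S S' : Type*} [RCLike 𝔽] [Fintype S] [Fintype S']
    (A : S → S → 𝔽) (A' : S' → S' → 𝔽)
    (hA : ∀ s t, A s t = -A t s) (hA' : ∀ s t, A' s t = -A' t s)
    (B : S' → S → 𝔽)
    (hPoisson : ∀ u v, ∀ x : S → 𝔽,
        ∑ s, ∑ t, A s t * B u s * B v t * x s * x t
          = A' u v * (∑ s, B u s * x s) * (∑ t, B v t * x t))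
    (hIm : ∀ u : S', ∃ s : S, B u s ≠ 0)
    (u v : S') (huv : u ≠ v) (s : S) (hB : B u s * B v s ≠ 0) :
    ∀ w : S', A' u w = A' v w := by
  classical
  have hAdiag : ∀ r : S, A r r = 0 := by
    intro r
    have := hA r r
    linear_combination this / 2
  -- diagonal identity
  have diag : ∀ p q : S', ∀ r : S, A' p q * (B p r * B q r) = 0 := by
    intro p q r
    have h := hPoisson p q (fun c => if c = r then (1 : 𝔽) else 0)
    simp only [mul_ite, mul_one, mul_zero, Finset.sum_ite_eq', Finset.mem_univ, if_true] at h
    rw [hAdiag r] at h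
    linear_combination -h
  -- cross identity
  have cross : ∀ p q : S', ∀ r t : S, r ≠ t →
      A r t * B p r * B q t + A t r * B p t * B q r
        = A' p q * (B p r * B q t + B p t * B q r) := by
    intro p q r t hrt
    have h := hPoisson p q
      (fun c => (if c = r then (1 : 𝔽) else 0) + (if c = t then (1 : 𝔽) else 0))
    simp only [mul_add, add_mul, mul_ite, mul_one, mul_zero, Finset.sum_add_distrib,
      Finset.sum_ite_eq', Finset.mem_univ, if_true] at h
    rw [hAdiag r, hAdiag t] at h
    have d1 := diag p q r
    have d2 := diag p q t
    linear_combination h + d1 + d2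
  intro w
  have hBu : B u s ≠ 0 := fun h => hB (by simp [h])
  have hBv : B v s ≠ 0 := fun h => hB (by simp [h])
  by_cases hws : B w s = 0
  · -- pick t with B w t ≠ 0; then t ≠ s
    obtain ⟨t, ht⟩ := hIm w
    have hts : s ≠ t := fun h => ht (h ▸ hws)
    have h1 := cross u w s t hts
    have h2 := cross v w s t hts
    rw [hws] at h1 h2
    have e1 : A' u w = A s t := by
      have key : A s t * (B u s * B w t) = A' u w * (B u s * B w t) := by linear_combination h1
      exact (mul_right_cancel₀ (mul_ne_zero hBu ht) key).symm
    have e2 : A' v w = A s t := by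
      have key : A s t * (B v s * B w t) = A' v w * (B v s * B w t) := by linear_combination h2
      exact (mul_right_cancel₀ (mul_ne_zero hBv ht) key).symm
    rw [e1, e2]
  · -- B w s ≠ 0: both A' u w and A' v w vanish
    have h1 := diag u w s
    have h2 := diag v w s
    have e1 : A' u w = 0 := by
      rcases mul_eq_zero.mp h1 with h | h
      · exact h
      · exact absurd h (mul_ne_zero hBu hws)
    have e2 : A' v w = 0 := by
      rcases mul_eq_zero.mp h2 with h | h
      · exact h
      · exact absurd h (mul_ne_zero hBv hws)
    rw [e1, e2]
end

section
/- Let Γ = (S,A) and Γ' = (S',A') be skew-symmetric graphs over 𝔽 with Γ' irreducible, and let φ : LV(Γ) → LV(Γ') be a surjective LV morphism. Then: (1) there exists a unique family (S_u)_{u∈S'} of nonempty, pairwise disjoint subsets of S whose union is S, such that (φ(x))_u = ∑_{s∈S_u} x_s for all x ∈ 𝔽^S and u ∈ S'; (2) for all u ≠ v in S' and all s ∈ S_u, t ∈ S_v one has A(s,t) = A'(u,v). -/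
open scoped BigOperators

attribute [local instance] Classical.propDecidable

/-- Proposition 3.5: normal form of surjective LV morphisms onto irreducible LV systems. -/
theorem stmt8 {𝔽 S S' : Type*} [RCLike 𝔽] [Fintype S] [Fintype S']
    (A : S → S → 𝔽) (A' : S' → S' → 𝔽)
    (hA : ∀ s t, A s t = -A t s) (hA' : ∀ s t, A' s t = -A' t s)
    (hirr : ∀ u v : S', skewRel A' u v → u = v)
    (φ : (S → 𝔽) →ₗ[𝔽] (S' → 𝔽)) (hφ : IsLVMorphism A A' φ)
    (hsurj : Function.Surjective φ) :
    (∃! P : S' → Finset S,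
        (∀ u, (P u).Nonempty) ∧
        (∀ u v, u ≠ v → Disjoint (P u) (P v)) ∧
        (∀ s : S, ∃ u, s ∈ P u) ∧
        ∀ (x : S → 𝔽) (u : S'), φ x u = ∑ s ∈ P u, x s) ∧
    ∀ P : S' → Finset S,
      (∀ (x : S → 𝔽) (u : S'), φ x u = ∑ s ∈ P u, x s) →
      ∀ u v : S', u ≠ v → ∀ s ∈ P u, ∀ t ∈ P v, A s t = A' u v := by
  obtain ⟨hPo, hH⟩ := hφ
  set B : S' → S → 𝔽 := fun u s => φ (Pi.single s 1) u with hBdef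
  have hB : ∀ u s, φ (Pi.single s 1) u = B u s := fun _ _ => rfl
  -- representation of φ by the matrix B
  have hrep : ∀ (x : S → 𝔽) (u : S'), φ x u = ∑ s, B u s * x s := by
    intro x u
    have hx : x = ∑ s, x s • (Pi.single s 1 : S → 𝔽) := by
      funext t; simp [Pi.single_apply, Finset.sum_ite_eq']
    conv_lhs => rw [hx]
    rw [map_sum]
    simp [hB, mul_comm]
  have hAdiag : ∀ s, A s s = 0 := by
    intro s
    have h2 : (2:𝔽) * A s s = 0 := by linear_combination hA s s
    simpa using h2
  have hA'diag : ∀ u, A' u u = 0 := by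
    intro u
    have h2 : (2:𝔽) * A' u u = 0 := by linear_combination hA' u u
    simpa using h2
  -- evaluation of the double sum at pairs of basis vectors
  have hsingle : ∀ u v s₀ t₀, (∑ s, ∑ t, A s t * B u s * B v t *
      (Pi.single s₀ 1 : S → 𝔽) s * (Pi.single t₀ 1 : S → 𝔽) t) = A s₀ t₀ * B u s₀ * B v t₀ := by
    intro u v s₀ t₀
    simp [Pi.single_apply, mul_ite, ite_mul, Finset.sum_ite_eq']
  -- E1
  have hE1 : ∀ u v s, A' u v * (B u s * B v s) = 0 := by
    intro u v s
    have h := hPo u v (Pi.single s 1)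
    simp only [hB] at h
    rw [hsingle] at h
    rw [hAdiag] at h
    linear_combination -h
  -- E2 (raw form)
  have hE2' : ∀ u v s t, (A s t * B u s * B v t) + (A t s * B u t * B v s)
      + (A s s * B u s * B v s) + (A t t * B u t * B v t)
      = A' u v * ((B u s + B u t) * (B v s + B v t)) := by
    intro u v s t
    have h := hPo u v (Pi.single s 1 + Pi.single t 1)
    have hx : ∀ w, φ (Pi.single s 1 + Pi.single t 1) w = B w s + B w t := by
      intro w; rw [map_add]; rfl
    rw [hx, hx] at h
    simp only [Pi.add_apply, mul_add, add_mul, Finset.sum_add_distrib, hB] at h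
    rw [hsingle, hsingle, hsingle, hsingle] at h
    linear_combination h
  -- E2 (clean form)
  have hE2 : ∀ u v s t, A s t * (B u s * B v t - B u t * B v s)
      = A' u v * (B u s * B v t + B u t * B v s) := by
    intro u v s t
    have h := hE2' u v s t
    have e1 := hE1 u v s
    have e2 := hE1 u v t
    have hts := hA t s
    rw [hAdiag, hAdiag] at h
    linear_combination h + e1 + e2 - B u t * B v s * hts
  -- each row of B is nonzero
  have hrow : ∀ u, ∃ t, B u t ≠ 0 := by
    intro u
    obtain ⟨x, hx⟩ := hsurj (Pi.single u 1)
    by_contra h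
    push_neg at h
    have h0 : φ x u = 0 := by rw [hrep]; simp [h]
    have h1 : φ x u = 1 := by rw [hx]; simp
    rw [h0] at h1
    exact zero_ne_one h1
  -- two nonzero entries in the same column ⇒ equal rows of A' ⇒ same row
  have h0 : ∀ s (a b : S'), B a s ≠ 0 → B b s ≠ 0 → a ≠ b → A' a b = 0 := by
    intro s a b ha hb _
    rcases mul_eq_zero.mp (hE1 a b s) with h | h
    · exact h
    · exact absurd h (mul_ne_zero ha hb)
  have hcol : ∀ s (u v : S'), B u s ≠ 0 → B v s ≠ 0 → u = v := by
    intro s u v hu hv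
    by_cases huv : u = v
    · exact huv
    · apply hirr
      intro w
      by_cases hw : B w s = 0
      · -- w outside the column support
        have key : ∀ a : S', B a s ≠ 0 → ∀ t, (A s t - A' a w) * B w t = 0 := by
          intro a ha t
          have h := hE2 a w s t
          have h2 : ((A s t - A' a w) * B w t) * B a s = 0 := by
            linear_combination h + (A s t + A' a w) * B a t * hw
          rcases mul_eq_zero.mp h2 with h3 | h3
          · exact h3
          · exact absurd h3 ha
        obtain ⟨t, ht⟩ := hrow w
        have e1 : A' u w = A s t := by
          rcases mul_eq_zero.mp (key u hu t) with h3 | h3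
          · linear_combination -h3
          · exact absurd h3 ht
        have e2 : A' v w = A s t := by
          rcases mul_eq_zero.mp (key v hv t) with h3 | h3
          · linear_combination -h3
          · exact absurd h3 ht
        rw [e1, e2]
      · -- w inside the column support
        by_cases hwu : w = u
        · subst hwu
          rw [hA'diag, h0 s v w hv hw (Ne.symm huv)]
        · by_cases hwv : w = v
          · subst hwv
            rw [hA'diag, h0 s u w hu hw huv]
          · rw [h0 s u w hu hw (fun h => hwu h.symm),
              h0 s v w hv hw (fun h => hwv h.symm)]
  -- columns sum to 1
  have hcolsum : ∀ s, ∑ u, B u s = 1 := by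
    intro s
    have h := hH (Pi.single s 1)
    simp only [hB] at h
    rw [h]
    simp [Pi.single_apply, Finset.sum_ite_eq']
  have hcolex : ∀ s, ∃ u, B u s ≠ 0 := by
    intro s
    obtain ⟨u, -, hu⟩ := Finset.exists_ne_zero_of_sum_ne_zero (s := Finset.univ)
      (f := fun u => B u s) (by rw [hcolsum s]; exact one_ne_zero)
    exact ⟨u, hu⟩
  choose Φ hΦ using hcolex
  have hB1 : ∀ s, B (Φ s) s = 1 := by
    intro s
    have h := hcolsum s
    rw [Finset.sum_eq_single (Φ s)] at h
    · exact h
    · intro b _ hb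
      by_contra hb0
      exact hb (hcol s b (Φ s) hb0 (hΦ s))
    · intro h'
      exact absurd (Finset.mem_univ _) h'
  have hB01 : ∀ u s, B u s = if Φ s = u then 1 else 0 := by
    intro u s
    split
    · next h => rw [← h]; exact hB1 s
    · next h =>
        by_contra h0
        exact h (hcol s u (Φ s) h0 (hΦ s)).symm
  set P : S' → Finset S := fun u => Finset.univ.filter (fun s => Φ s = u) with hPdef
  have hmemP : ∀ u s, s ∈ P u ↔ Φ s = u := by
    intro u s
    simp [hPdef]
  have hφP : ∀ (x : S → 𝔽) (u : S'), φ x u = ∑ s ∈ P u, x s := by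
    intro x u
    rw [hrep, hPdef, Finset.sum_filter]
    refine Finset.sum_congr rfl fun s _ => ?_
    rw [hB01]
    split <;> simp
  -- any partition representing φ agrees with P
  have hQP : ∀ Q : S' → Finset S,
      (∀ (x : S → 𝔽) (u : S'), φ x u = ∑ s ∈ Q u, x s) → Q = P := by
    intro Q hQ
    funext u
    ext s
    have h1 : (if s ∈ Q u then (1:𝔽) else 0) = if Φ s = u then 1 else 0 := by
      calc (if s ∈ Q u then (1:𝔽) else 0) = φ (Pi.single s 1) u := by
            rw [hQ]; simp [Pi.single_apply, Finset.sum_ite_eq]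
        _ = if Φ s = u then 1 else 0 := by rw [hB]; exact hB01 u s
    rw [hmemP]
    constructor
    · intro hm
      by_contra hp
      rw [if_pos hm, if_neg hp] at h1
      exact one_ne_zero h1
    · intro hm
      by_contra hq
      rw [if_neg hq, if_pos hm] at h1
      exact one_ne_zero h1.symm
  refine ⟨⟨P, ⟨?_, ?_, ?_, hφP⟩, fun Q hQ => hQP Q hQ.2.2.2⟩, ?_⟩
  · -- nonempty
    intro u
    obtain ⟨t, ht⟩ := hrow u
    refine ⟨t, (hmemP u t).mpr ?_⟩
    by_contra h
    rw [hB01] at ht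
    simp [h] at ht
  · -- disjoint
    intro u v huv
    rw [Finset.disjoint_left]
    intro s hs hs'
    exact huv (((hmemP u s).mp hs).symm.trans ((hmemP v s).mp hs'))
  · -- cover
    intro s
    exact ⟨Φ s, (hmemP (Φ s) s).mpr rfl⟩
  · -- part 2
    intro Q hQ u v huv s hs t ht
    rw [hQP Q hQ] at hs ht
    have hΦs : Φ s = u := (hmemP u s).mp hs
    have hΦt : Φ t = v := (hmemP v t).mp ht
    have h := hE2 u v s t
    rw [hB01 u s, hB01 v t, hB01 u t, hB01 v s, hΦs, hΦt] at h
    rw [if_pos rfl, if_pos rfl, if_neg (Ne.symm huv), if_neg huv] at h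
    linear_combination h
end

section
/- Let Γ = (S,A) and Γ' = (S',A') be skew-symmetric graphs over 𝔽 with decloned graphs Γ̄ = (S̄,Ā) and Γ̄' = (S̄',Ā'), and LV decloning maps LV(p) : 𝔽^S → 𝔽^{S̄}, LV(p') : 𝔽^{S'} → 𝔽^{S̄'}. Suppose φ : 𝔽^S → 𝔽^{S'} and ψ : 𝔽^{S̄} → 𝔽^{S̄'} are linear maps with LV(p') ∘ φ = ψ ∘ LV(p). If φ is an LV morphism from LV(Γ) to LV(Γ'), then ψ is an LV morphism from LV(Γ̄) to LV(Γ̄'). -/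
open scoped BigOperators

attribute [local instance] Classical.propDecidable

section AuxLVDecl

variable {𝔽 : Type*} [RCLike 𝔽] {S Q : Type*} [Fintype S]

lemma lvExt_apply' (π : S → Q) (x : S → 𝔽) (u : Q) :
    lvExt 𝔽 π x u = ∑ s, if π s = u then x s else 0 := rfl

lemma lvExt_single' (π : S → Q) (s : S) (c : 𝔽) :
    lvExt 𝔽 π (Pi.single s c) = Pi.single (π s) c := by
  funext u
  rw [lvExt_apply']
  have h : ∀ t : S, (if π t = u then (Pi.single s c : S → 𝔽) t else 0)
      = (if t = s then (if π s = u then c else 0) else 0) := by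
    intro t
    by_cases ht : t = s
    · subst ht; simp [Pi.single_apply]
    · simp [Pi.single_apply, ht]
  rw [Finset.sum_congr rfl fun t _ => h t, Finset.sum_ite_eq' Finset.univ s]
  simp [Pi.single_apply, eq_comm]

lemma lvExt_total' [Fintype Q] (π : S → Q) (x : S → 𝔽) :
    ∑ u, lvExt 𝔽 π x u = ∑ s, x s := by
  simp only [lvExt_apply']
  rw [Finset.sum_comm]
  refine Finset.sum_congr rfl fun s _ => ?_
  simp [Finset.sum_ite_eq]

lemma regroup1 [Fintype Q] (π : S → Q) (h : Q → 𝔽) (x : S → 𝔽) :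
    (∑ q, h q * (∑ s, if π s = q then x s else 0)) = ∑ s, h (π s) * x s := by
  have e : ∀ q, h q * (∑ s, if π s = q then x s else 0)
      = ∑ s, if π s = q then h q * x s else 0 := by
    intro q
    rw [Finset.mul_sum]
    exact Finset.sum_congr rfl fun s _ => by split_ifs <;> simp
  rw [Finset.sum_congr rfl fun q _ => e q, Finset.sum_comm]
  refine Finset.sum_congr rfl fun s _ => ?_
  rw [Finset.sum_ite_eq]
  simp

lemma regroup2 [Fintype Q] (π : S → Q) (g : Q → Q → 𝔽) (x : S → 𝔽) :
    (∑ q, ∑ r, g q r * (∑ s, if π s = q then x s else 0) * (∑ t, if π t = r then x t else 0))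
      = ∑ s, ∑ t, g (π s) (π t) * x s * x t := by
  have h1 : ∀ q, (∑ r, g q r * (∑ s, if π s = q then x s else 0) * (∑ t, if π t = r then x t else 0))
      = ∑ t, g q (π t) * (∑ s, if π s = q then x s else 0) * x t :=
    fun q => regroup1 π (fun r => g q r * (∑ s, if π s = q then x s else 0)) x
  rw [Finset.sum_congr rfl fun q _ => h1 q, Finset.sum_comm]
  conv_rhs => rw [Finset.sum_comm]
  refine Finset.sum_congr rfl fun t _ => ?_
  have h3 : ∀ q, g q (π t) * (∑ s, if π s = q then x s else 0) * x t
      = (g q (π t) * x t) * (∑ s, if π s = q then x s else 0) := fun q => by ring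
  rw [Finset.sum_congr rfl fun q _ => h3 q, regroup1 π (fun q => g q (π t) * x t) x]
  exact Finset.sum_congr rfl fun s _ => by ring

lemma sum_mul_sum_mul {T : Type*} [Fintype T] (f g : T → 𝔽) (C : 𝔽) :
    C * (∑ u, f u) * (∑ v, g v) = ∑ u, ∑ v, f u * g v * C := by
  calc C * (∑ u, f u) * (∑ v, g v) = ((∑ u, f u) * (∑ v, g v)) * C := by ring
    _ = (∑ u, ∑ v, f u * g v) * C := by rw [Finset.sum_mul_sum]
    _ = ∑ u, (∑ v, f u * g v) * C := by rw [Finset.sum_mul]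
    _ = ∑ u, ∑ v, f u * g v * C := Finset.sum_congr rfl fun u _ => by rw [Finset.sum_mul]

lemma sum_swap4 {T U : Type*} [Fintype T] [Fintype U] (F : U → U → T → T → 𝔽) :
    (∑ s : T, ∑ t : T, ∑ u : U, ∑ v : U, F u v s t) = ∑ u, ∑ v, ∑ s, ∑ t, F u v s t := by
  calc (∑ s : T, ∑ t : T, ∑ u : U, ∑ v : U, F u v s t)
      = ∑ s : T, ∑ u : U, ∑ t : T, ∑ v : U, F u v s t :=
        Finset.sum_congr rfl fun s _ => Finset.sum_comm
    _ = ∑ u : U, ∑ s : T, ∑ t : T, ∑ v : U, F u v s t := Finset.sum_comm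
    _ = ∑ u : U, ∑ s : T, ∑ v : U, ∑ t : T, F u v s t :=
        Finset.sum_congr rfl fun u _ => Finset.sum_congr rfl fun s _ => Finset.sum_comm
    _ = ∑ u : U, ∑ v : U, ∑ s : T, ∑ t : T, F u v s t :=
        Finset.sum_congr rfl fun u _ => Finset.sum_comm

end AuxLVDecl
/-- Lemma 3.7: if a linear map descends through the LV decloning maps, and it is an LV
morphism, then the descended map is an LV morphism of the decloned LV systems. -/
theorem stmt9 {𝔽 S S' : Type*} [RCLike 𝔽] [Fintype S] [Fintype S']
    (A : S → S → 𝔽) (A' : S' → S' → 𝔽)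
    (hA : ∀ s t, A s t = -A t s) (hA' : ∀ s t, A' s t = -A' t s)
    (φ : (S → 𝔽) →ₗ[𝔽] (S' → 𝔽))
    (ψ : (Quotient (declSetoid A) → 𝔽) →ₗ[𝔽] (Quotient (declSetoid A') → 𝔽))
    (hcomm : ∀ x : S → 𝔽,
        lvExt 𝔽 (Quotient.mk (declSetoid A')) (φ x)
          = ψ (lvExt 𝔽 (Quotient.mk (declSetoid A)) x))
    (hφ : IsLVMorphism A A' φ) :
    IsLVMorphism (declAdj A hA) (declAdj A' hA') ψ := by
  letI : DecidableEq (Quotient (declSetoid A)) := fun a b => Classical.propDecidable (a = b)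
  letI : DecidableEq (Quotient (declSetoid A')) := fun a b => Classical.propDecidable (a = b)
  have hsurj : ∀ y : Quotient (declSetoid A) → 𝔽,
      ∃ x : S → 𝔽, lvExt 𝔽 (Quotient.mk (declSetoid A)) x = y := by
    intro y
    refine ⟨∑ q, Pi.single q.out (y q), ?_⟩
    rw [map_sum]
    have h : ∀ q : Quotient (declSetoid A),
        lvExt 𝔽 (Quotient.mk (declSetoid A)) (Pi.single q.out (y q)) = Pi.single q (y q) := by
      intro q
      rw [lvExt_single', Quotient.out_eq]
    rw [Finset.sum_congr rfl fun q _ => h q, Finset.univ_sum_single]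
  have hψ2 : ∀ s : S, ψ (Pi.single (Quotient.mk (declSetoid A) s) 1)
      = lvExt 𝔽 (Quotient.mk (declSetoid A')) (φ (Pi.single s 1)) := by
    intro s
    rw [← lvExt_single' (Quotient.mk (declSetoid A)) s (1 : 𝔽), ← hcomm]
  constructor
  · intro ub vb y
    obtain ⟨x, rfl⟩ := hsurj y
    rw [← hcomm x]
    have central : ∑ s, ∑ t, A s t * (lvExt 𝔽 (Quotient.mk (declSetoid A')) (φ (Pi.single s 1))) ub
          * (lvExt 𝔽 (Quotient.mk (declSetoid A')) (φ (Pi.single t 1))) vb * x s * x t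
        = declAdj A' hA' ub vb * (lvExt 𝔽 (Quotient.mk (declSetoid A')) (φ x)) ub
          * (lvExt 𝔽 (Quotient.mk (declSetoid A')) (φ x)) vb := by
      simp only [lvExt_apply']
      calc ∑ s, ∑ t, A s t * (∑ u, if Quotient.mk (declSetoid A') u = ub then φ (Pi.single s 1) u else 0)
              * (∑ v, if Quotient.mk (declSetoid A') v = vb then φ (Pi.single t 1) v else 0) * x s * x t
          = ∑ s, ∑ t, ∑ u, ∑ v, (if Quotient.mk (declSetoid A') u = ub then (1:𝔽) else 0)
              * (if Quotient.mk (declSetoid A') v = vb then (1:𝔽) else 0)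
              * (A s t * φ (Pi.single s 1) u * φ (Pi.single t 1) v * x s * x t) := by
            refine Finset.sum_congr rfl fun s _ => Finset.sum_congr rfl fun t _ => ?_
            have e0 : A s t * (∑ u, if Quotient.mk (declSetoid A') u = ub then φ (Pi.single s 1) u else 0)
                * (∑ v, if Quotient.mk (declSetoid A') v = vb then φ (Pi.single t 1) v else 0) * x s * x t
              = (A s t * x s * x t)
                * (∑ u, if Quotient.mk (declSetoid A') u = ub then φ (Pi.single s 1) u else 0)
                * (∑ v, if Quotient.mk (declSetoid A') v = vb then φ (Pi.single t 1) v else 0) := by ring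
            rw [e0, sum_mul_sum_mul]
            refine Finset.sum_congr rfl fun u _ => Finset.sum_congr rfl fun v _ => ?_
            split_ifs <;> ring
        _ = ∑ u, ∑ v, ∑ s, ∑ t, (if Quotient.mk (declSetoid A') u = ub then (1:𝔽) else 0)
              * (if Quotient.mk (declSetoid A') v = vb then (1:𝔽) else 0)
              * (A s t * φ (Pi.single s 1) u * φ (Pi.single t 1) v * x s * x t) := sum_swap4 _
        _ = ∑ u, ∑ v, (if Quotient.mk (declSetoid A') u = ub then (1:𝔽) else 0)
              * (if Quotient.mk (declSetoid A') v = vb then (1:𝔽) else 0)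
              * (A' u v * φ x u * φ x v) := by
            refine Finset.sum_congr rfl fun u _ => Finset.sum_congr rfl fun v _ => ?_
            simp only [← Finset.mul_sum]
            rw [hφ.1 u v x]
        _ = ∑ u, ∑ v, (if Quotient.mk (declSetoid A') u = ub then (1:𝔽) else 0)
              * (if Quotient.mk (declSetoid A') v = vb then (1:𝔽) else 0)
              * (declAdj A' hA' ub vb * φ x u * φ x v) := by
            refine Finset.sum_congr rfl fun u _ => Finset.sum_congr rfl fun v _ => ?_
            by_cases h1 : Quotient.mk (declSetoid A') u = ub
            · by_cases h2 : Quotient.mk (declSetoid A') v = vb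
              · rw [← h1, ← h2]; rfl
              · simp [h2]
            · simp [h1]
        _ = declAdj A' hA' ub vb * (∑ u, if Quotient.mk (declSetoid A') u = ub then φ x u else 0)
              * (∑ v, if Quotient.mk (declSetoid A') v = vb then φ x v else 0) := by
            rw [sum_mul_sum_mul (fun u => if Quotient.mk (declSetoid A') u = ub then φ x u else 0)
              (fun v => if Quotient.mk (declSetoid A') v = vb then φ x v else 0) (declAdj A' hA' ub vb)]
            refine Finset.sum_congr rfl fun u _ => Finset.sum_congr rfl fun v _ => ?_
            split_ifs <;> ring
    trans (∑ s, ∑ t, declAdj A hA (Quotient.mk (declSetoid A) s) (Quotient.mk (declSetoid A) t)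
        * ψ (Pi.single (Quotient.mk (declSetoid A) s) 1) ub
        * ψ (Pi.single (Quotient.mk (declSetoid A) t) 1) vb * x s * x t)
    · exact regroup2 (Quotient.mk (declSetoid A))
        (fun q r => declAdj A hA q r * ψ (Pi.single q 1) ub * ψ (Pi.single r 1) vb) x
    · simp only [hψ2]
      exact central
  · intro y
    obtain ⟨x, rfl⟩ := hsurj y
    rw [← hcomm x, lvExt_total', hφ.2 x, lvExt_total']
end

section
/- Let Γ = (S,A) and Γ' = (S',A') be skew-symmetric graphs over 𝔽 with Γ' irreducible. If φ : LV(Γ) → LV(Γ') is an LV isomorphism, then there exists a unique graph isomorphism Φ : Γ → Γ' such that φ = LV(Φ). -/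
open scoped BigOperators

attribute [local instance] Classical.propDecidable

/-- Core combinatorial lemma: a matrix `B` satisfying the LV relations, with column
sums `1` and nonzero rows, relative to an irreducible target graph, has columns which
are standard basis vectors, and the induced vertex map is a surjective graph morphism. -/
theorem lv_aux {𝔽 : Type*} [RCLike 𝔽] {S S' : Type*} [Fintype S] [Fintype S']
    (A : S → S → 𝔽) (A' : S' → S' → 𝔽)
    (hA : ∀ s t, A s t = -A t s) (hA' : ∀ s t, A' s t = -A' t s)
    (hirr : ∀ u v : S', (∀ w, A' u w = A' v w) → u = v)
    (B : S' → S → 𝔽)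
    (hR1 : ∀ u v s, A' u v * B u s * B v s = 0)
    (hR2 : ∀ u v s t, s ≠ t →
      A s t * (B u s * B v t - B u t * B v s) = A' u v * (B u s * B v t + B u t * B v s))
    (hcolsum : ∀ s, ∑ u, B u s = 1)
    (hrow : ∀ w, ∃ t, B w t ≠ 0)
    (hinj : ∀ s t : S, (∀ u, B u s = B u t) → s = t) :
    ∃ Φ : S → S', (∀ u s, B u s = if u = Φ s then 1 else 0) ∧
      Function.Bijective Φ ∧ (∀ s t, A' (Φ s) (Φ t) = A s t) := by
  have hAss : ∀ s, A s s = 0 := fun s => by linear_combination (hA s s) / 2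
  have hA'ss : ∀ u, A' u u = 0 := fun u => by linear_combination (hA' u u) / 2
  -- two nonzero entries in the same column coincide
  have hcol : ∀ s u v, B u s ≠ 0 → B v s ≠ 0 → u = v := by
    intro s u v hu hv
    apply hirr
    intro w
    by_cases hw : B w s = 0
    · obtain ⟨t, ht⟩ := hrow w
      have hst : s ≠ t := fun h => ht (h ▸ hw)
      have h1 := hR2 u w s t hst
      have h2 := hR2 v w s t hst
      simp only [hw, mul_zero, sub_zero, add_zero] at h1 h2
      have hne : B u s * B w t ≠ 0 := mul_ne_zero hu ht
      have hne' : B v s * B w t ≠ 0 := mul_ne_zero hv ht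
      exact (mul_right_cancel₀ hne h1).symm.trans (mul_right_cancel₀ hne' h2)
    · -- w in the column: both brackets vanish by R1
      have h1 := hR1 u w s
      have h2 := hR1 v w s
      have e1 : A' u w = 0 := by
        rcases mul_eq_zero.mp h1 with h | h
        · rcases mul_eq_zero.mp h with h | h
          · exact h
          · exact absurd h hu
        · exact absurd h hw
      have e2 : A' v w = 0 := by
        rcases mul_eq_zero.mp h2 with h | h
        · rcases mul_eq_zero.mp h with h | h
          · exact h
          · exact absurd h hv
        · exact absurd h hw
      rw [e1, e2]
  -- each column is nonzero
  have hex : ∀ s, ∃ u, B u s ≠ 0 := by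
    intro s
    by_contra h
    push_neg at h
    have : (1 : 𝔽) = 0 := by
      rw [← hcolsum s]
      exact Finset.sum_eq_zero fun u _ => h u
    exact one_ne_zero this
  choose Φ hΦ using hex
  have hBval : ∀ u s, B u s = if u = Φ s then 1 else 0 := by
    have hB1 : ∀ s, B (Φ s) s = 1 := by
      intro s
      have hsum : ∑ u, B u s = B (Φ s) s := by
        refine Finset.sum_eq_single (Φ s) (fun b _ hb => ?_) (fun h => absurd (Finset.mem_univ _) h)
        by_contra hnz
        exact hb (hcol s b (Φ s) hnz (hΦ s))
      rw [← hsum, hcolsum]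
    intro u s
    by_cases h : u = Φ s
    · rw [if_pos h, h, hB1]
    · rw [if_neg h]
      by_contra hnz
      exact h (hcol s u (Φ s) hnz (hΦ s))
  have hΦinj : Function.Injective Φ := by
    intro s t hpp
    refine hinj s t fun u => ?_
    rw [hBval u s, hBval u t, hpp]
  refine ⟨Φ, hBval, ⟨hΦinj, ?_⟩, ?_⟩
  · intro w
    obtain ⟨t, ht⟩ := hrow w
    exact ⟨t, (hcol t w (Φ t) ht (hΦ t)).symm⟩
  · intro s t
    by_cases hst : s = t
    · subst hst
      rw [hA'ss, hAss]
    · have h := hR2 (Φ s) (Φ t) s t hst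
      by_cases hpp : Φ s = Φ t
      · exact absurd (hΦinj hpp) hst
      · rw [hBval (Φ s) s, hBval (Φ s) t, hBval (Φ t) s, hBval (Φ t) t,
          if_pos rfl, if_pos rfl, if_neg hpp, if_neg (fun hh => hpp hh.symm)] at h
        linear_combination -h

/-- Proposition 3.9: an LV isomorphism onto an irreducible LV system is induced by a unique
graph isomorphism. -/
theorem stmt11 {𝔽 S S' : Type*} [RCLike 𝔽] [Fintype S] [Fintype S']
    (A : S → S → 𝔽) (A' : S' → S' → 𝔽)
    (hA : ∀ s t, A s t = -A t s) (hA' : ∀ s t, A' s t = -A' t s)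
    (hirr : ∀ u v : S', skewRel A' u v → u = v)
    (φ : (S → 𝔽) →ₗ[𝔽] (S' → 𝔽)) (hφ : IsLVMorphism A A' φ)
    (hbij : Function.Bijective φ) :
    ∃! Φ : S → S', Function.Bijective Φ ∧ IsGraphMorphism A A' Φ ∧ φ = lvExt 𝔽 Φ := by
  have hAss : ∀ s, A s s = 0 := fun s => by linear_combination (hA s s) / 2
  -- the key bilinear relations for the matrix of φ
  have hR1 : ∀ u v s, A' u v * φ (Pi.single s 1) u * φ (Pi.single s 1) v = 0 := by
    intro u v s
    have h := hφ.1 u v (Pi.single s 1)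
    simp only [Pi.single_apply, mul_ite, mul_one, mul_zero, Finset.sum_ite_eq',
      Finset.sum_ite_eq, Finset.mem_univ, if_true] at h
    linear_combination (φ (Pi.single s 1) u * φ (Pi.single s 1) v) * hAss s - h
  have hR2 : ∀ u v s t, s ≠ t →
      A s t * (φ (Pi.single s 1) u * φ (Pi.single t 1) v
        - φ (Pi.single t 1) u * φ (Pi.single s 1) v)
      = A' u v * (φ (Pi.single s 1) u * φ (Pi.single t 1) v
        + φ (Pi.single t 1) u * φ (Pi.single s 1) v) := by
    intro u v s t hst
    have h := hφ.1 u v (Pi.single s 1 + Pi.single t 1)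
    rw [map_add] at h
    simp only [Pi.add_apply, Pi.single_apply, mul_add, mul_ite, mul_one, mul_zero,
      Finset.sum_add_distrib, Finset.sum_ite_eq', Finset.sum_ite_eq,
      Finset.mem_univ, if_true] at h
    linear_combination h + hR1 u v s + hR1 u v t
      - (φ (Pi.single s 1) u * φ (Pi.single s 1) v) * hAss s
      - (φ (Pi.single t 1) u * φ (Pi.single t 1) v) * hAss t
      - (φ (Pi.single t 1) u * φ (Pi.single s 1) v) * hA t s
  have hcolsum : ∀ s, ∑ u, φ (Pi.single s 1) u = 1 := by
    intro s
    simpa [Pi.single_apply] using hφ.2 (Pi.single s 1)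
  have hrep : ∀ (x : S → 𝔽) u, φ x u = ∑ s, x s * φ (Pi.single s 1) u := by
    intro x u
    have hx : x = ∑ s, x s • (Pi.single s 1 : S → 𝔽) := by
      funext j
      simp [Pi.single_apply, Finset.sum_apply]
    nth_rewrite 1 [hx]
    rw [map_sum]
    simp [Finset.sum_apply, smul_eq_mul]
  have hrow : ∀ w, ∃ t, φ (Pi.single t 1) w ≠ 0 := by
    intro w
    by_contra h
    push_neg at h
    obtain ⟨x, hx⟩ := hbij.2 (Pi.single w 1)
    have h1 : φ x w = 1 := by rw [hx]; simp [Pi.single_apply]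
    rw [hrep x w] at h1
    rw [Finset.sum_eq_zero fun s _ => by rw [h s, mul_zero]] at h1
    exact zero_ne_one h1
  have hinj : ∀ s t : S, (∀ u, φ (Pi.single s 1) u = φ (Pi.single t 1) u) → s = t := by
    intro s t h
    have h2 := hbij.1 (funext h : φ (Pi.single s 1) = φ (Pi.single t 1))
    by_contra hst
    have h3 := congrFun h2 s
    simp [Pi.single_apply, hst] at h3
  obtain ⟨Φ, hBval, hΦbij, hmor⟩ := lv_aux A A' hA hA' hirr
    (fun u s => φ (Pi.single s 1) u) hR1 hR2 hcolsum hrow hinj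
  have hBval' : ∀ u s, φ (Pi.single s 1) u = if u = Φ s then 1 else 0 := hBval
  refine ⟨Φ, ⟨hΦbij, hmor, ?_⟩, ?_⟩
  · apply LinearMap.ext
    intro x
    funext u
    rw [hrep x u]
    show _ = ∑ s, if Φ s = u then x s else 0
    refine Finset.sum_congr rfl fun s _ => ?_
    rw [hBval' u s]
    by_cases h : u = Φ s
    · rw [if_pos h, if_pos h.symm, mul_one]
    · rw [if_neg h, if_neg (fun hh => h hh.symm), mul_zero]
  · rintro Φ' ⟨hbij', hmor', heq'⟩
    funext s
    have h1 : φ (Pi.single s 1) (Φ' s) = 1 := by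
      rw [heq']
      show (∑ s', if Φ' s' = Φ' s then (Pi.single s (1:𝔽) : S → 𝔽) s' else 0) = 1
      rw [Finset.sum_eq_single s]
      · simp [Pi.single_apply]
      · intro b _ hb
        simp [Pi.single_apply, hb]
      · exact fun h => absurd (Finset.mem_univ s) h
    have h2 := hBval' (Φ' s) s
    rw [h1] at h2
    by_contra hne
    rw [if_neg hne] at h2
    exact one_ne_zero h2
end

section
/- Two skew-symmetric graphs Γ = (S,A) and Γ' = (S',A') over 𝔽 are isomorphic as graphs if and only if there exists an LV isomorphism from LV(Γ) to LV(Γ'). -/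
open scoped BigOperators

attribute [local instance] Classical.propDecidable

private lemma auxE {𝕂 S S' : Type*} [Field 𝕂] [Fintype S] [Fintype S']
    (A : S → S → 𝕂) (A' : S' → S' → 𝕂) (B : S' → S → 𝕂)
    (hA0 : ∀ s, A s s = 0)
    (hstar : ∀ s t u v, A s t * (B u s * B v t - B u t * B v s)
      = A' u v * (B u s * B v t + B u t * B v s))
    (hF2 : ∀ s u v, A' u v * B u s * B v s = 0)
    (hcol : ∀ s, ∑ u, B u s = 1)
    (hcinj : ∀ s t, (∀ v, B v s = B v t) → s = t)
    {s t : S} {u : S'} (hst : A s t ≠ 0) (hus : B u s ≠ 0) : B u t = 0 := by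
  by_contra hut
  have hz : ∀ (r : S) (v : S'), B u r ≠ 0 → B v r ≠ 0 → A' u v = 0 := by
    intro r v h1 h2
    have h := hF2 r u v
    rcases mul_eq_zero.mp h with h | h
    · rcases mul_eq_zero.mp h with h | h
      exacts [h, absurd h h1]
    · exact absurd h h2
  have main : ∀ v, A' u v = 0 → B u s * B v t = B u t * B v s := by
    intro v h0
    have h := hstar s t u v
    rw [h0, zero_mul] at h
    rcases mul_eq_zero.mp h with h | h
    · exact absurd h hst
    · exact sub_eq_zero.mp h
  have key : ∀ v, B u s * B v t = B u t * B v s := by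
    intro v
    by_cases hvs : B v s = 0
    · by_cases hvt : B v t = 0
      · rw [hvs, hvt, mul_zero, mul_zero]
      · exact main v (hz t v hut hvt)
    · exact main v (hz s v hus hvs)
  have hBeq : B u s = B u t := by
    have h1 : ∑ v, B u s * B v t = ∑ v, B u t * B v s :=
      Finset.sum_congr rfl fun v _ => key v
    rwa [← Finset.mul_sum, ← Finset.mul_sum, hcol, hcol, mul_one, mul_one] at h1
  have hcols : ∀ v, B v s = B v t := by
    intro v
    have h := key v
    rw [hBeq] at h
    exact (mul_left_cancel₀ (hBeq ▸ hus) h).symm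
  have hseq := hcinj s t hcols
  subst hseq
  exact hst (hA0 s)

private lemma auxD {𝕂 S S' : Type*} [Field 𝕂] [Fintype S] [Fintype S']
    (A : S → S → 𝕂) (A' : S' → S' → 𝕂) (B : S' → S → 𝕂)
    (hA : ∀ s t, A s t = -A t s)
    (hA0 : ∀ s, A s s = 0)
    (hstar : ∀ s t u v, A s t * (B u s * B v t - B u t * B v s)
      = A' u v * (B u s * B v t + B u t * B v s))
    (hF2 : ∀ s u v, A' u v * B u s * B v s = 0)
    (hcol : ∀ s, ∑ u, B u s = 1)
    (hcinj : ∀ s t, (∀ v, B v s = B v t) → s = t)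
    {s t : S} {u v : S'} (hst : A s t ≠ 0) (hus : B u s ≠ 0) (hvt : B v t ≠ 0) :
    A' u v = A s t := by
  have hut : B u t = 0 := auxE A A' B hA0 hstar hF2 hcol hcinj hst hus
  have hts : A t s ≠ 0 := by rw [hA t s]; exact neg_ne_zero.mpr hst
  have hvs : B v s = 0 := auxE A A' B hA0 hstar hF2 hcol hcinj hts hvt
  have h := hstar s t u v
  rw [hut, hvs, zero_mul, sub_zero, add_zero] at h
  exact (mul_right_cancel₀ (mul_ne_zero hus hvt) h).symm

private lemma auxC4 {𝕂 S S' : Type*} [Field 𝕂] [Fintype S] [Fintype S']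
    (A : S → S → 𝕂) (A' : S' → S' → 𝕂) (B : S' → S → 𝕂)
    (hA : ∀ s t, A s t = -A t s)
    (hA0 : ∀ s, A s s = 0)
    (hstar : ∀ s t u v, A s t * (B u s * B v t - B u t * B v s)
      = A' u v * (B u s * B v t + B u t * B v s))
    (hF2 : ∀ s u v, A' u v * B u s * B v s = 0)
    (hcol : ∀ s, ∑ u, B u s = 1)
    (hcinj : ∀ s t, (∀ v, B v s = B v t) → s = t)
    (hrow : ∀ u, ∃ s, B u s ≠ 0)
    {s : S} {u v : S'} (hus : B u s ≠ 0) (hvs : B v s ≠ 0) :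
    ∀ w, A' u w = A' v w := by
  intro w
  obtain ⟨t, hwt⟩ := hrow w
  by_cases hst : A s t = 0
  · have hz : ∀ u', B u' s ≠ 0 → A' u' w = 0 := by
      intro u' hu'
      by_cases hws : B w s = 0
      · have h := hstar s t u' w
        rw [hst, zero_mul, hws, mul_zero, add_zero] at h
        rcases mul_eq_zero.mp h.symm with h0 | h0
        · exact h0
        · exact absurd h0 (mul_ne_zero hu' hwt)
      · have h := hF2 s u' w
        rcases mul_eq_zero.mp h with h | h
        · rcases mul_eq_zero.mp h with h | h
          exacts [h, absurd h hu']
        · exact absurd h hws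
    rw [hz u hus, hz v hvs]
  · rw [auxD A A' B hA hA0 hstar hF2 hcol hcinj hst hus hwt,
        auxD A A' B hA hA0 hstar hF2 hcol hcinj hst hvs hwt]

/-- Proposition 3.11: two skew-symmetric graphs are isomorphic iff their LV systems are
(linearly) isomorphic. -/
theorem stmt12 {𝔽 S S' : Type*} [RCLike 𝔽] [Fintype S] [Fintype S']
    (A : S → S → 𝔽) (A' : S' → S' → 𝔽)
    (hA : ∀ s t, A s t = -A t s) (hA' : ∀ s t, A' s t = -A' t s) :
    (∃ Φ : S → S', Function.Bijective Φ ∧ IsGraphMorphism A A' Φ) ↔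
    (∃ φ : (S → 𝔽) →ₗ[𝔽] (S' → 𝔽), IsLVMorphism A A' φ ∧ Function.Bijective φ) := by
  constructor
  · rintro ⟨Φ, hbij, hg⟩
    have hg' : ∀ s t, A' (Φ s) (Φ t) = A s t := hg
    show ∃ φ : (S → 𝔽) →ₗ[𝔽] (S' → 𝔽), ((∀ u v, ∀ x : S → 𝔽,
        ∑ s, ∑ t, A s t * φ (Pi.single s 1) u * φ (Pi.single t 1) v * x s * x t
          = A' u v * φ x u * φ x v) ∧
        ∀ x : S → 𝔽, ∑ u, φ x u = ∑ s, x s) ∧ Function.Bijective φ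
    set e : S ≃ S' := Equiv.ofBijective Φ hbij with he
    have hext : ∀ (x : S → 𝔽) (u : S'), lvExt 𝔽 Φ x u = x (e.symm u) := by
      intro x u
      show (∑ s, if Φ s = u then x s else 0) = x (e.symm u)
      rw [Finset.sum_eq_single (e.symm u)]
      · have : Φ (e.symm u) = u := e.apply_symm_apply u
        simp [this]
      · intro b _ hb
        have hΦb : Φ b ≠ u := by
          intro h
          exact hb (by rw [← h]; exact (e.symm_apply_apply b).symm)
        simp [hΦb]
      · intro h
        exact absurd (Finset.mem_univ _) h
    refine ⟨lvExt 𝔽 Φ, ⟨?_, ?_⟩, ?_⟩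
    · intro u v x
      have hB : ∀ (s : S) (w : S'),
          lvExt 𝔽 Φ (Pi.single s 1) w = if e.symm w = s then 1 else 0 := by
        intro s w
        rw [hext, Pi.single_apply]
      have hAuv : A' u v = A (e.symm u) (e.symm v) := by
        have h1 : Φ (e.symm u) = u := e.apply_symm_apply u
        have h2 : Φ (e.symm v) = v := e.apply_symm_apply v
        rw [← hg' (e.symm u) (e.symm v), h1, h2]
      calc ∑ s, ∑ t, A s t * lvExt 𝔽 Φ (Pi.single s 1) u * lvExt 𝔽 Φ (Pi.single t 1) v * x s * x t
          = ∑ s, ∑ t, (if e.symm v = t then (if e.symm u = s then A s t * x s * x t else 0) else 0) := by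
            refine Finset.sum_congr rfl fun s _ => Finset.sum_congr rfl fun t _ => ?_
            rw [hB, hB]
            by_cases h1 : e.symm u = s <;> by_cases h2 : e.symm v = t <;> simp [h1, h2]
        _ = A (e.symm u) (e.symm v) * x (e.symm u) * x (e.symm v) := by
            simp only [Finset.sum_ite_eq, Finset.mem_univ, if_true]
        _ = A' u v * lvExt 𝔽 Φ x u * lvExt 𝔽 Φ x v := by
            rw [hext, hext, hAuv]
    · intro x
      calc ∑ u, lvExt 𝔽 Φ x u = ∑ u, x (e.symm u) := Finset.sum_congr rfl fun u _ => hext x u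
        _ = ∑ s, x s := e.symm.sum_comp x
    · constructor
      · intro x y hxy
        funext s
        have h := congrFun hxy (e s)
        rwa [hext, hext, e.symm_apply_apply] at h
      · intro y
        refine ⟨fun s => y (e s), ?_⟩
        funext u
        rw [hext, e.apply_symm_apply]
  · rintro ⟨φ, ⟨hP, hH⟩, hbij⟩
    show ∃ Φ : S → S', Function.Bijective Φ ∧ ∀ s t, A' (Φ s) (Φ t) = A s t
    set B : S' → S → 𝔽 := fun u s => φ (Pi.single s 1) u with hBdef
    have hBapp : ∀ (u : S') (s : S), φ (Pi.single s 1) u = B u s := by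
      intro u s
      simp only [hBdef]
    have hPB : ∀ u v (x : S → 𝔽), (∑ s, ∑ t, A s t * B u s * B v t * x s * x t)
        = A' u v * φ x u * φ x v := by
      intro u v x
      simp only [hBdef]
      exact hP u v x
    -- basic skew facts
    have hA0 : ∀ s, A s s = 0 := by
      intro s
      have h := hA s s
      have h2 : (2 : 𝔽) * A s s = 0 := by
        rw [two_mul]
        nth_rewrite 1 [h]
        exact neg_add_cancel _
      rcases mul_eq_zero.mp h2 with h' | h'
      · exact absurd h' two_ne_zero
      · exact h'
    have hA'0 : ∀ u, A' u u = 0 := by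
      intro u
      have h := hA' u u
      have h2 : (2 : 𝔽) * A' u u = 0 := by
        rw [two_mul]
        nth_rewrite 1 [h]
        exact neg_add_cancel _
      rcases mul_eq_zero.mp h2 with h' | h'
      · exact absurd h' two_ne_zero
      · exact h'
    -- φ in terms of B
    have hlin : ∀ (x : S → 𝔽) (u : S'), φ x u = ∑ s, B u s * x s := by
      intro x u
      conv_lhs => rw [← Finset.univ_sum_single x, map_sum]
      rw [Finset.sum_apply]
      refine Finset.sum_congr rfl fun s _ => ?_
      have hsx : (Pi.single s (x s) : S → 𝔽) = x s • (Pi.single s 1 : S → 𝔽) := by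
        funext r
        by_cases h : r = s
        · subst h; simp
        · simp [Pi.single_eq_of_ne h]
      rw [hsx, map_smul]
      show (x s • φ (Pi.single s 1)) u = B u s * x s
      rw [Pi.smul_apply, hBapp u s, smul_eq_mul, mul_comm]
    -- columns sum to one
    have hcol : ∀ s, ∑ u, B u s = 1 := by
      intro s
      have h := hH (Pi.single s 1)
      have h2 : (∑ t, Pi.single s (1 : 𝔽) t) = 1 := by
        simp [Pi.single_apply]
      rw [h2] at h
      exact h
    -- F2
    have hF2 : ∀ s u v, A' u v * B u s * B v s = 0 := by
      intro s u v
      have h := hPB u v (Pi.single s 1)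
      rw [hBapp u s, hBapp v s] at h
      have hz : (∑ s', ∑ t', A s' t' * B u s' * B v t' *
          (Pi.single s 1 : S → 𝔽) s' * (Pi.single s 1 : S → 𝔽) t') = 0 := by
        refine Finset.sum_eq_zero fun s' _ => Finset.sum_eq_zero fun t' _ => ?_
        by_cases h1 : s' = s
        · by_cases h2 : t' = s
          · subst h1; subst h2
            rw [hA0, zero_mul, zero_mul, zero_mul, zero_mul]
          · rw [Pi.single_eq_of_ne h2, mul_zero]
        · rw [Pi.single_eq_of_ne h1, mul_zero, zero_mul]
      rw [hz] at h
      exact h.symm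
    -- star identity
    have hstar : ∀ s t u v, A s t * (B u s * B v t - B u t * B v s)
        = A' u v * (B u s * B v t + B u t * B v s) := by
      intro s t u v
      by_cases hstq : s = t
      · subst hstq
        have h := hF2 s u v
        rw [hA0 s, zero_mul, mul_add, ← mul_assoc, h, add_zero]
      · set x : S → 𝔽 := Pi.single s 1 + Pi.single t 1 with hxdef
        have hxx : ∀ r, x r = (if r = s then (1:𝔽) else 0) + (if r = t then 1 else 0) := by
          intro r
          simp [hxdef, Pi.single_apply]
        have hxs : x s = 1 := by rw [hxx]; simp [hstq]
        have hxt : x t = 1 := by rw [hxx]; simp [Ne.symm hstq]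
        have hx0 : ∀ r, r ≠ s → r ≠ t → x r = 0 := by
          intro r h1 h2; rw [hxx]; simp [h1, h2]
        have hφx : ∀ w, φ x w = B w s + B w t := by
          intro w
          rw [hxdef, map_add, Pi.add_apply, hBapp w s, hBapp w t]
        have h := hPB u v x
        have hL : (∑ s', ∑ t', A s' t' * B u s' * B v t' * x s' * x t')
            = A s t * (B u s * B v t) + A t s * (B u t * B v s) := by
          have hinner : ∀ s', (∑ t', A s' t' * B u s' * B v t' * x s' * x t')
              = ∑ t' ∈ ({s, t} : Finset S), A s' t' * B u s' * B v t' * x s' * x t' := by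
            intro s'
            refine (Finset.sum_subset (Finset.subset_univ _) ?_).symm
            intro r _ hr
            have hrs : r ≠ s := fun hh => hr (by simp [hh])
            have hrt : r ≠ t := fun hh => hr (by simp [hh])
            rw [hx0 r hrs hrt, mul_zero]
          have houter : (∑ s', ∑ t', A s' t' * B u s' * B v t' * x s' * x t')
              = ∑ s' ∈ ({s, t} : Finset S), ∑ t', A s' t' * B u s' * B v t' * x s' * x t' := by
            refine (Finset.sum_subset (Finset.subset_univ _) ?_).symm
            intro r _ hr
            have hrs : r ≠ s := fun hh => hr (by simp [hh])
            have hrt : r ≠ t := fun hh => hr (by simp [hh])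
            refine Finset.sum_eq_zero fun t' _ => ?_
            rw [hx0 r hrs hrt, mul_zero, zero_mul]
          rw [houter, Finset.sum_pair hstq, hinner s, hinner t,
              Finset.sum_pair hstq, Finset.sum_pair hstq, hxs, hxt]
          rw [hA0 s, hA0 t]
          ring
        rw [hL, hφx u, hφx v] at h
        rw [hA t s] at h
        have e1 := hF2 s u v
        have e2 := hF2 t u v
        linear_combination h + e1 + e2
    -- column injectivity
    have hcinj : ∀ s t, (∀ v, B v s = B v t) → s = t := by
      intro s t h
      by_contra hne
      have hφeq : φ (Pi.single s 1) = φ (Pi.single t 1) := by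
        funext u
        rw [hBapp u s, hBapp u t]
        exact h u
      have hss := congrFun (hbij.1 hφeq) s
      rw [Pi.single_eq_same, Pi.single_eq_of_ne hne] at hss
      exact one_ne_zero hss
    -- rows nonzero
    have hrow : ∀ u, ∃ s, B u s ≠ 0 := by
      intro u
      by_contra hcon
      push_neg at hcon
      obtain ⟨x, hx⟩ := hbij.2 (Pi.single u 1)
      have h1 : (1 : 𝔽) = 0 := by
        calc (1 : 𝔽) = φ x u := by rw [hx, Pi.single_eq_same]
          _ = ∑ s, B u s * x s := hlin x u
          _ = 0 := Finset.sum_eq_zero fun s _ => by rw [hcon s, zero_mul]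
      exact one_ne_zero h1
    -- columns nonzero
    have hcolne : ∀ s, ∃ u, B u s ≠ 0 := by
      intro s
      by_contra hcon
      push_neg at hcon
      have h := hcol s
      rw [Finset.sum_eq_zero (fun u _ => hcon u)] at h
      exact zero_ne_one h
    choose u0 hu0 using hcolne
    set θ : S → Quotient (declSetoid A') := fun s => Quotient.mk (declSetoid A') (u0 s) with hθdef
    have hK : ∀ (s : S) (u : S'), B u s ≠ 0 → Quotient.mk (declSetoid A') u = θ s := by
      intro s u h
      exact Quotient.sound
        (auxC4 A A' B hA hA0 hstar hF2 hcol hcinj hrow h (hu0 s))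
    -- cardinality comparison
    have hcardle : ∀ q : Quotient (declSetoid A'),
        Fintype.card {s : S // θ s = q} ≤
        Fintype.card {u : S' // Quotient.mk (declSetoid A') u = q} := by
      intro q
      set ext : ({s : S // θ s = q} → 𝔽) → (S → 𝔽) :=
        fun y s => if h : θ s = q then y ⟨s, h⟩ else 0 with hextdef
      have hextadd : ∀ y z, ext (y + z) = ext y + ext z := by
        intro y z
        funext s
        by_cases h : θ s = q <;> simp [hextdef, h]
      have hextsmul : ∀ (c : 𝔽) y, ext (c • y) = c • ext y := by
        intro c y
        funext s
        by_cases h : θ s = q <;> simp [hextdef, h]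
      set ψ : ({s : S // θ s = q} → 𝔽) →ₗ[𝔽] ({u : S' // Quotient.mk (declSetoid A') u = q} → 𝔽) :=
        { toFun := fun y w => φ (ext y) w.1,
          map_add' := fun y z => by
            funext w
            simp [hextadd, map_add],
          map_smul' := fun c y => by
            funext w
            simp [hextsmul, map_smul] } with hψdef
      have hker : ∀ y, ψ y = 0 → y = 0 := by
        intro y hy
        have hφ0 : φ (ext y) = 0 := by
          funext u
          by_cases hq : Quotient.mk (declSetoid A') u = q
          · exact congrFun hy ⟨u, hq⟩
          · rw [hlin]
            show (∑ s, B u s * ext y s) = 0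
            refine Finset.sum_eq_zero fun s _ => ?_
            by_cases hBs : B u s = 0
            · rw [hBs, zero_mul]
            · have hθs : ¬ θ s = q := fun hh => hq ((hK s u hBs).trans hh)
              have : ext y s = 0 := by rw [hextdef]; exact dif_neg hθs
              rw [this, mul_zero]
        have hx0 : ext y = 0 := hbij.1 (hφ0.trans (map_zero φ).symm)
        funext w
        obtain ⟨s, hs⟩ := w
        have h := congrFun hx0 s
        rw [hextdef] at h
        simp only [dif_pos hs] at h
        exact h
      have hψinj : Function.Injective ψ := by
        intro y z h
        have h0 : ψ (y - z) = 0 := by rw [map_sub, h, sub_self]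
        have := hker (y - z) h0
        exact sub_eq_zero.mp this
      calc Fintype.card {s : S // θ s = q}
          = Module.finrank 𝔽 ({s : S // θ s = q} → 𝔽) := (Module.finrank_pi 𝔽).symm
        _ ≤ Module.finrank 𝔽 ({u : S' // Quotient.mk (declSetoid A') u = q} → 𝔽) :=
            LinearMap.finrank_le_finrank_of_injective hψinj
        _ = Fintype.card {u : S' // Quotient.mk (declSetoid A') u = q} := Module.finrank_pi 𝔽
    have hcards : (∑ q, Fintype.card {s : S // θ s = q})
        = ∑ q, Fintype.card {u : S' // Quotient.mk (declSetoid A') u = q} := by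
      have h1 : (∑ q, Fintype.card {s : S // θ s = q}) = Fintype.card S := by
        rw [← Fintype.card_sigma]
        exact Fintype.card_congr (Equiv.sigmaFiberEquiv θ)
      have h2 : (∑ q, Fintype.card {u : S' // Quotient.mk (declSetoid A') u = q})
          = Fintype.card S' := by
        rw [← Fintype.card_sigma]
        exact Fintype.card_congr (Equiv.sigmaFiberEquiv (Quotient.mk (declSetoid A')))
      have h3 : Fintype.card S = Fintype.card S' := by
        have el := LinearEquiv.ofBijective φ hbij
        have h := el.finrank_eq
        rwa [Module.finrank_pi, Module.finrank_pi] at h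
      rw [h1, h2, h3]
    have hcardeq : ∀ q, Fintype.card {s : S // θ s = q}
        = Fintype.card {u : S' // Quotient.mk (declSetoid A') u = q} :=
      fun q => (Finset.sum_eq_sum_iff_of_le (fun i _ => hcardle i)).mp hcards q (Finset.mem_univ q)
    have eqv : ∀ q, {s : S // θ s = q} ≃ {u : S' // Quotient.mk (declSetoid A') u = q} :=
      fun q => Fintype.equivOfCardEq (hcardeq q)
    set E : S ≃ S' := (Equiv.sigmaFiberEquiv θ).symm.trans
      ((Equiv.sigmaCongrRight eqv).trans (Equiv.sigmaFiberEquiv (Quotient.mk (declSetoid A'))))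
      with hEdef
    have hEmk : ∀ s, Quotient.mk (declSetoid A') (E s) = θ s := by
      intro s
      exact (eqv (θ s) ⟨s, rfl⟩).2
    refine ⟨E, E.bijective, ?_⟩
    intro s t
    have h1 : ∀ w, A' (E s) w = A' (u0 s) w := Quotient.exact (hEmk s)
    have h2 : ∀ w, A' (E t) w = A' (u0 t) w := Quotient.exact (hEmk t)
    have hmain : A' (u0 s) (u0 t) = A s t := by
      by_cases hst : A s t = 0
      · by_cases hθq : θ s = θ t
        · have h3 : ∀ w, A' (u0 s) w = A' (u0 t) w := Quotient.exact hθq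
          rw [h3 (u0 t), hA'0 (u0 t), hst]
        · have hB0 : B (u0 s) t = 0 := by
            by_contra hc
            exact hθq ((hK s (u0 s) (hu0 s)).symm.trans (hK t (u0 s) hc))
          have h := hstar s t (u0 s) (u0 t)
          rw [hst, zero_mul, hB0, zero_mul, add_zero] at h
          rcases mul_eq_zero.mp h.symm with h' | h'
          · rw [h', hst]
          · exact absurd h' (mul_ne_zero (hu0 s) (hu0 t))
      · exact auxD A A' B hA hA0 hstar hF2 hcol hcinj hst (hu0 s) (hu0 t)
    calc A' (E s) (E t) = A' (u0 s) (E t) := h1 (E t)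
      _ = -A' (E t) (u0 s) := hA' _ _
      _ = -A' (u0 t) (u0 s) := by rw [h2 (u0 s)]
      _ = A' (u0 s) (u0 t) := (hA' (u0 s) (u0 t)).symm
      _ = A s t := hmain
end
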